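/- arXiv:1907.12313 — 6 statements merged into one kernel-verified Lean document; each statement's English description precedes it below -/
import Mathlib

section
/- Let n ≥ 1, 1 ≤ k ≤ n, let r₀₀, r₁, …, r_n be real numbers and x = (x₁,…,x_n) ∈ ℝ^n. Then the degree-(k+1) real polynomial p_{k+1}(t) = (r₀₀ + t) σ_k(r+tI) − Σ_{i=1}^n q_{i,k}(t) x_i² has only real roots, i.e. it splits over ℝ (has k+1 real roots counted with multiplicity). -/
open Polynomial

/-- `σ_m(r+tI) = Σ_{1≤i₁<…<i_m≤n} (t+r_{i₁})⋯(t+r_{i_m})` as a real polynomial in `t`. -/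
noncomputable def sigmaTP (n : ℕ) (r : Fin n → ℝ) (m : ℕ) : Polynomial ℝ :=
  ∑ s ∈ Finset.powersetCard m (Finset.univ : Finset (Fin n)),
    ∏ i ∈ s, (X + C (r i))

/-- `q_{i,k}(t) = Σ_{j=0}^{k−1} (−1)^j σ_{k−1−j}(r+tI) (t+r_i)^j`. -/
noncomputable def qPoly (n : ℕ) (r : Fin n → ℝ) (i : Fin n) (k : ℕ) : Polynomial ℝ :=
  ∑ j ∈ Finset.range k, ((-1 : ℝ) ^ j) • (sigmaTP n r (k - 1 - j) * (X + C (r i)) ^ j)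

/-- `p_{k+1}(t) = (r₀₀ + t) σ_k(r+tI) − Σ_{i=1}^n q_{i,k}(t) x_i²`. -/
noncomputable def pPoly (n k : ℕ) (r₀₀ : ℝ) (r : Fin n → ℝ) (x : Fin n → ℝ) :
    Polynomial ℝ :=
  (X + C r₀₀) * sigmaTP n r k - ∑ i : Fin n, ((x i) ^ 2) • qPoly n r i k

/-- `π_n(t) = (t+r₁)⋯(t+r_n)`. -/
noncomputable def piN (n : ℕ) (r : Fin n → ℝ) : Polynomial ℝ :=
  ∏ i : Fin n, (X + C (r i))

/-- `π_{i,n}(t) = ∏_{j≠i} (t+r_j)`. -/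
noncomputable def piIN (n : ℕ) (r : Fin n → ℝ) (i : Fin n) : Polynomial ℝ :=
  ∏ j ∈ Finset.univ.erase i, (X + C (r j))

/-!
For `Im z > 0` the polynomial `w ↦ (z + r₀₀) π_n(w) - Σ x_i² π_{i,n}(w)` has no zero with
`Im w > 0`, because its value divided by `π_n(w)` has imaginary part
`Im z + Σ x_i² Im w / |w + r_i|² > 0`. By Gauss–Lucas the same holds for its `(n-k)`-th
derivative. Since `D^{n-k} π_n = (n-k)! σ_k` and `D^{n-k} π_{i,n} = (n-k)! q_{i,k}`, evaluating
that derivative at `w = z` gives `(n-k)! p_{k+1}(z)`, so `p_{k+1}` has no zero in the upper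
half-plane, and, having real coefficients, no non-real zero at all.
-/

open Nat

namespace Polynomial

section esymmXAddC

variable {R ι : Type*} [CommSemiring R] (r : ι → R)

noncomputable def esymmXAddC (S : Finset ι) (m : ℕ) : R[X] :=
  ∑ T ∈ S.powersetCard m, ∏ i ∈ T, (X + C (r i))

theorem esymmXAddC_zero (S : Finset ι) : esymmXAddC r S 0 = 1 := by
  simp [esymmXAddC]

theorem esymmXAddC_card (S : Finset ι) : esymmXAddC r S S.card = ∏ i ∈ S, (X + C (r i)) := by
  simp [esymmXAddC]

theorem esymmXAddC_insert [DecidableEq ι] {S : Finset ι} {a : ι} (ha : a ∉ S) (m : ℕ) :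
    esymmXAddC r (insert a S) (m + 1) =
      esymmXAddC r S (m + 1) + (X + C (r a)) * esymmXAddC r S m := by
  have haT : ∀ T ∈ S.powersetCard m, a ∉ T := fun T hT haT =>
    ha ((Finset.mem_powersetCard.mp hT).1 haT)
  rw [esymmXAddC, Finset.powersetCard_succ_insert ha, Finset.sum_union, Finset.sum_image,
    esymmXAddC, esymmXAddC, Finset.mul_sum]
  · exact congrArg _ (Finset.sum_congr rfl fun T hT => Finset.prod_insert (haT T hT))
  · intro T hT T' hT' h
    rw [← Finset.erase_insert (haT T hT), ← Finset.erase_insert (haT T' hT'), h]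
  · refine Finset.disjoint_left.mpr fun U hU hU' => ?_
    obtain ⟨T, -, rfl⟩ := Finset.mem_image.mp hU'
    exact ha ((Finset.mem_powersetCard.mp hU).1 (Finset.mem_insert_self a T))

theorem derivative_esymmXAddC [DecidableEq ι] (S : Finset ι) (m : ℕ) :
    derivative (esymmXAddC r S (m + 1)) = (S.card - m) • esymmXAddC r S m := by
  have hprod : ∀ T : Finset ι, derivative (∏ i ∈ T, (X + C (r i))) =
      ∑ i ∈ T, ∏ j ∈ T.erase i, (X + C (r j)) := fun T => by
    simp [derivative_prod_finset]
  -- both sides count the pairs (T, i) with i ∈ T ⊆ S, #T = m + 1, via U = T \ {i}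
  calc derivative (esymmXAddC r S (m + 1))
      = ∑ p ∈ (S.powersetCard (m + 1)).sigma id, ∏ j ∈ p.1.erase p.2, (X + C (r j)) := by
        rw [esymmXAddC, derivative_sum, Finset.sum_sigma]
        exact Finset.sum_congr rfl fun T _ => hprod T
    _ = ∑ p ∈ (S.powersetCard m).sigma (S \ ·), ∏ j ∈ p.1, (X + C (r j)) := by
        refine Finset.sum_nbij' (fun p => ⟨p.1.erase p.2, p.2⟩)
          (fun p => ⟨insert p.2 p.1, p.2⟩) ?_ ?_ ?_ ?_ fun _ _ => rfl
        · rintro ⟨T, i⟩ hp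
          simp only [Finset.mem_sigma, Finset.mem_powersetCard, Finset.mem_sdiff, id] at hp ⊢
          obtain ⟨⟨hTS, hcard⟩, hi⟩ := hp
          refine ⟨⟨(Finset.erase_subset i T).trans hTS, ?_⟩, hTS hi,
            Finset.notMem_erase i T⟩
          rw [Finset.card_erase_of_mem hi, hcard, Nat.add_sub_cancel]
        · rintro ⟨T, i⟩ hp
          simp only [Finset.mem_sigma, Finset.mem_powersetCard, Finset.mem_sdiff, id] at hp ⊢
          obtain ⟨⟨hTS, hcard⟩, hiS, hiT⟩ := hp
          refine ⟨⟨Finset.insert_subset hiS hTS, ?_⟩, Finset.mem_insert_self i T⟩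
          rw [Finset.card_insert_of_notMem hiT, hcard]
        · rintro ⟨T, i⟩ hp
          rw [Finset.insert_erase (s := T) (Finset.mem_sigma.mp hp).2]
        · rintro ⟨T, i⟩ hp
          simp only [Finset.erase_insert (Finset.mem_sdiff.mp (Finset.mem_sigma.mp hp).2).2]
    _ = (S.card - m) • esymmXAddC r S m := by
        rw [Finset.sum_sigma, esymmXAddC, Finset.smul_sum]
        refine Finset.sum_congr rfl fun T hT => ?_
        obtain ⟨hTS, hcard⟩ := Finset.mem_powersetCard.mp hT
        simp only [Finset.sum_const, Finset.card_sdiff_of_subset hTS, hcard]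

theorem iterate_derivative_prod_X_add_C [DecidableEq ι] (S : Finset ι) {j : ℕ}
    (hj : j ≤ S.card) :
    derivative^[j] (∏ i ∈ S, (X + C (r i))) = j ! • esymmXAddC r S (S.card - j) := by
  induction j with
  | zero => simp [esymmXAddC_card]
  | succ j ih =>
    obtain ⟨l, hl⟩ : ∃ l, S.card - j = l + 1 := ⟨S.card - (j + 1), by omega⟩
    rw [Function.iterate_succ_apply', ih (by omega), derivative_smul, hl, derivative_esymmXAddC,
      smul_smul, show S.card - l = j + 1 by omega, show S.card - (j + 1) = l by omega,
      Nat.factorial_succ, mul_comm]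

theorem monic_prod_X_add_C (S : Finset ι) : (∏ i ∈ S, (X + C (r i))).Monic :=
  monic_prod_of_monic _ _ fun i _ => monic_X_add_C (r i)

theorem natDegree_prod_X_add_C [Nontrivial R] (S : Finset ι) :
    (∏ i ∈ S, (X + C (r i))).natDegree = S.card := by
  simp [natDegree_prod_of_monic _ _ fun i _ => monic_X_add_C (r i)]

theorem natDegree_esymmXAddC_le [Nontrivial R] (S : Finset ι) (m : ℕ) :
    (esymmXAddC r S m).natDegree ≤ m :=
  natDegree_sum_le_of_forall_le _ _ fun T hT => by
    rw [natDegree_prod_X_add_C, (Finset.mem_powersetCard.mp hT).2]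

theorem coeff_esymmXAddC [Nontrivial R] (S : Finset ι) (m : ℕ) :
    (esymmXAddC r S m).coeff m = S.card.choose m := by
  have hlead : ∀ T ∈ S.powersetCard m, (∏ i ∈ T, (X + C (r i))).coeff m = 1 := by
    intro T hT
    rw [← (Finset.mem_powersetCard.mp hT).2, ← natDegree_prod_X_add_C r T]
    exact monic_prod_X_add_C r T
  simp [esymmXAddC, finsetSum_coeff, Finset.sum_congr rfl hlead]

end esymmXAddC

theorem eval_derivative_ne_zero_of_im_pos {P : ℂ[X]} (hP : 0 < P.natDegree)
    (h : ∀ w : ℂ, 0 < w.im → P.eval w ≠ 0) {w : ℂ} (hw : 0 < w.im) :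
    P.derivative.eval w ≠ 0 := by
  intro hw0
  have hroots : P.rootSet ℂ ⊆ {z : ℂ | z.im ≤ 0} := fun z hz => by
    rw [mem_rootSet, coe_aeval_eq_eval] at hz
    exact not_lt.mp fun hz' => h z hz' hz.2
  have hconv : Convex ℝ {z : ℂ | z.im ≤ 0} := convex_halfSpace_le Complex.imLm.isLinear 0
  have hw' : w ∈ P.derivative.rootSet ℂ :=
    mem_rootSet.mpr ⟨derivative_ne_zero.mpr hP.ne', by simpa using hw0⟩
  exact not_le.mpr hw <| convexHull_min hroots hconv <|
    rootSet_derivative_subset_convexHull_rootSet (natDegree_pos_iff_degree_pos.mp hP) hw'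

theorem eval_iterate_derivative_ne_zero_of_im_pos {P : ℂ[X]} {m : ℕ} (hm : m < P.natDegree)
    (h : ∀ w : ℂ, 0 < w.im → P.eval w ≠ 0) {w : ℂ} (hw : 0 < w.im) :
    (derivative^[m] P).eval w ≠ 0 := by
  induction m generalizing P with
  | zero => exact h w hw
  | succ m ih =>
    rw [Function.iterate_succ_apply]
    exact ih (by rw [natDegree_derivative]; omega)
      fun w hw => eval_derivative_ne_zero_of_im_pos (by omega) h hw

theorem splits_of_eval_map_ne_zero_of_im_pos {p : ℝ[X]}
    (h : ∀ z : ℂ, 0 < z.im → (p.map (algebraMap ℝ ℂ)).eval z ≠ 0) : p.Splits := by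
  refine Splits.of_splits_map (algebraMap ℝ ℂ) (IsAlgClosed.splits _) fun z hz => ?_
  have hz0 := (mem_roots'.mp hz).2
  have him : z.im = 0 := by
    rcases lt_trichotomy z.im 0 with hneg | hzero | hpos
    · refine absurd ?_ (h (starRingEnd ℂ z) (by simpa using hneg))
      rw [eval_map_algebraMap, aeval_conj, ← eval_map_algebraMap, hz0, map_zero]
    · exact hzero
    · exact absurd hz0 (h z hpos)
  exact ⟨z.re, Complex.ext (by simp) (by simp [him])⟩

theorem eval_iterate_derivative_C_mul_map_sub (A B : ℝ[X]) (c : ℝ) (m : ℕ) (z : ℂ) :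
    (derivative^[m] (C (z + c) * A.map (algebraMap ℝ ℂ) - B.map (algebraMap ℝ ℂ))).eval z =
      (((X + C c) * derivative^[m] A - derivative^[m] B).map (algebraMap ℝ ℂ)).eval z := by
  rw [iterate_derivative_sub, iterate_derivative_C_mul, iterate_derivative_map,
    iterate_derivative_map]
  simp

end Polynomial

section pPoly

variable {n : ℕ} (r : Fin n → ℝ)

theorem sigmaTP_eq_esymmXAddC (m : ℕ) : sigmaTP n r m = esymmXAddC r Finset.univ m := rfl

theorem qPoly_succ (i : Fin n) (k : ℕ) :
    qPoly n r i (k + 1) = sigmaTP n r k - (X + C (r i)) * qPoly n r i k := by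
  rw [qPoly, Finset.sum_range_succ', qPoly, Finset.mul_sum]
  simp only [pow_zero, one_smul, mul_one, Nat.add_sub_cancel, Nat.sub_zero, sub_eq_neg_add,
    ← Finset.sum_neg_distrib]
  refine congrArg (· + _) (Finset.sum_congr rfl fun j _ => ?_)
  rw [show k - (j + 1) = k - 1 - j by omega, smul_eq_C_mul, smul_eq_C_mul]
  simp only [map_pow, map_neg, map_one]
  ring

theorem qPoly_succ_eq_esymmXAddC (i : Fin n) (k : ℕ) :
    qPoly n r i (k + 1) = esymmXAddC r (Finset.univ.erase i) k := by
  induction k with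
  | zero => simp [qPoly, sigmaTP_eq_esymmXAddC, esymmXAddC_zero]
  | succ k ih =>
    rw [qPoly_succ, ih, sigmaTP_eq_esymmXAddC, ← Finset.insert_erase (Finset.mem_univ i),
      esymmXAddC_insert r (Finset.notMem_erase i _), Finset.insert_erase (Finset.mem_univ i)]
    ring

theorem iterate_derivative_piN {k : ℕ} (hkn : k ≤ n) :
    derivative^[n - k] (piN n r) = (n - k)! • sigmaTP n r k := by
  have hcard : (Finset.univ : Finset (Fin n)).card = n := Finset.card_fin n
  rw [piN, iterate_derivative_prod_X_add_C r _ (by omega), hcard,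
    Nat.sub_sub_self hkn, sigmaTP_eq_esymmXAddC]

theorem iterate_derivative_piIN (i : Fin n) {k : ℕ} (hk1 : 1 ≤ k) (hkn : k ≤ n) :
    derivative^[n - k] (piIN n r i) = (n - k)! • qPoly n r i k := by
  obtain ⟨k, rfl⟩ := Nat.exists_eq_add_of_le' hk1
  have hcard : (Finset.univ.erase i).card = n - 1 := by simp
  rw [piIN, iterate_derivative_prod_X_add_C r _ (by omega), hcard,
    show n - 1 - (n - (k + 1)) = k by omega, qPoly_succ_eq_esymmXAddC]

variable (r₀₀ : ℝ) (x : Fin n → ℝ)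

theorem factorial_smul_pPoly {k : ℕ} (hk1 : 1 ≤ k) (hkn : k ≤ n) :
    (n - k)! • pPoly n k r₀₀ r x =
      (X + C r₀₀) * derivative^[n - k] (piN n r) -
        derivative^[n - k] (∑ i, x i ^ 2 • piIN n r i) := by
  simp only [pPoly, iterate_derivative_piN r hkn, iterate_derivative_sum, iterate_derivative_smul,
    iterate_derivative_piIN r _ hk1 hkn, smul_sub, Finset.smul_sum, mul_smul_comm]
  exact congrArg _ (Finset.sum_congr rfl fun i _ => smul_comm _ _ _)

theorem natDegree_pPoly {k : ℕ} (hk1 : 1 ≤ k) (hkn : k ≤ n) :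
    (pPoly n k r₀₀ r x).natDegree = k + 1 := by
  have hσ : (sigmaTP n r k).natDegree ≤ k := natDegree_esymmXAddC_le r _ k
  have hq : (∑ i, x i ^ 2 • qPoly n r i k).natDegree < k := by
    obtain ⟨k, rfl⟩ := Nat.exists_eq_add_of_le' hk1
    refine lt_of_le_of_lt (natDegree_sum_le_of_forall_le _ _ fun i _ => ?_) k.lt_succ_self
    rw [qPoly_succ_eq_esymmXAddC]
    exact (natDegree_smul_le _ _).trans (natDegree_esymmXAddC_le r _ k)
  have hlead : (pPoly n k r₀₀ r x).coeff (k + 1) = n.choose k := by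
    rw [pPoly, coeff_sub, coeff_eq_zero_of_natDegree_lt (hq.trans k.lt_succ_self), add_mul,
      coeff_add, coeff_X_mul, coeff_C_mul,
      coeff_eq_zero_of_natDegree_lt (hσ.trans_lt k.lt_succ_self), sigmaTP_eq_esymmXAddC,
      coeff_esymmXAddC, Finset.card_fin]
    ring
  refine natDegree_eq_of_le_of_coeff_ne_zero ?_
    (hlead ▸ Nat.cast_ne_zero.mpr (Nat.choose_pos hkn).ne')
  refine (natDegree_sub_le _ _).trans (max_le ?_ (by omega))
  exact natDegree_mul_le.trans (by rw [natDegree_X_add_C]; omega)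

end pPoly

section arrowPoly

variable {n : ℕ} (r₀₀ : ℝ) (r x : Fin n → ℝ)

/-- The determinant of the arrow matrix `[[z + r₀₀, x], [xᵀ, diag (w + r)]]`, as a polynomial
in `w`. -/
noncomputable def arrowPoly (z : ℂ) : ℂ[X] :=
  C (z + r₀₀) * (piN n r).map (algebraMap ℝ ℂ) -
    (∑ i, x i ^ 2 • piIN n r i).map (algebraMap ℝ ℂ)

theorem natDegree_arrowPoly (hn : 0 < n) {z : ℂ} (hz : 0 < z.im) :
    (arrowPoly r₀₀ r x z).natDegree = n := by
  have hz0 : z + r₀₀ ≠ 0 := fun h => by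
    have := congrArg Complex.im h
    simp at this
    linarith
  have hπ : (C (z + r₀₀) * (piN n r).map (algebraMap ℝ ℂ)).natDegree = n := by
    rw [natDegree_C_mul hz0, natDegree_map, piN, natDegree_prod_X_add_C, Finset.card_fin]
  have hB : ((∑ i, x i ^ 2 • piIN n r i).map (algebraMap ℝ ℂ)).natDegree < n := by
    rw [natDegree_map]
    refine (natDegree_sum_le_of_forall_le _ _ fun i _ => ?_).trans_lt (Nat.sub_lt hn one_pos)
    refine (natDegree_smul_le _ _).trans ?_
    simp [piIN, natDegree_prod_X_add_C]
  rw [arrowPoly, natDegree_sub_eq_left_of_natDegree_lt (by rwa [hπ]), hπ]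

theorem eval_arrowPoly_ne_zero {z w : ℂ} (hz : 0 < z.im) (hw : 0 < w.im) :
    (arrowPoly r₀₀ r x z).eval w ≠ 0 := by
  have hfac : ∀ i, w + r i ≠ 0 := fun i h => by
    have := congrArg Complex.im h
    simp at this
    linarith
  have heval : (arrowPoly r₀₀ r x z).eval w =
      (∏ i, (w + r i)) * (z + r₀₀ - ∑ i, (x i : ℂ) ^ 2 * (w + r i)⁻¹) := by
    simp only [arrowPoly, piN, piIN, eval_sub, eval_mul, eval_add, eval_C, eval_map_algebraMap,
      map_sum, map_smul, map_prod, map_add, aeval_X, aeval_C, Complex.coe_algebraMap,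
      Complex.real_smul, mul_sub, Finset.mul_sum]
    refine congrArg₂ (· - ·) (mul_comm _ _) (Finset.sum_congr rfl fun i _ => ?_)
    rw [← Finset.mul_prod_erase _ _ (Finset.mem_univ i)]
    field_simp [hfac i]
    push_cast
    ring
  have him : 0 < (z + r₀₀ - ∑ i, (x i : ℂ) ^ 2 * (w + r i)⁻¹).im := by
    have hterm : ∀ i, ((x i : ℂ) ^ 2 * (w + r i)⁻¹).im ≤ 0 := fun i => by
      rw [← Complex.ofReal_pow, Complex.im_ofReal_mul, Complex.inv_im]
      exact mul_nonpos_of_nonneg_of_nonpos (sq_nonneg _)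
        (div_nonpos_of_nonpos_of_nonneg (by simpa using hw.le) (Complex.normSq_nonneg _))
    simp only [Complex.sub_im, Complex.add_im, Complex.ofReal_im, add_zero, Complex.im_sum]
    linarith [Finset.sum_nonpos fun i (_ : i ∈ Finset.univ) => hterm i]
  rw [heval]
  exact mul_ne_zero (Finset.prod_ne_zero_iff.mpr fun i _ => hfac i)
    fun h => by simp [h] at him

end arrowPoly

theorem eval_map_pPoly_ne_zero {n k : ℕ} (hk1 : 1 ≤ k) (hkn : k ≤ n) (r₀₀ : ℝ)
    (r x : Fin n → ℝ) {z : ℂ} (hz : 0 < z.im) :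
    ((pPoly n k r₀₀ r x).map (algebraMap ℝ ℂ)).eval z ≠ 0 := by
  have h := eval_iterate_derivative_ne_zero_of_im_pos (m := n - k)
    (by rw [natDegree_arrowPoly r₀₀ r x (by omega) hz]; omega)
    (fun w hw => eval_arrowPoly_ne_zero r₀₀ r x hz hw) hz
  rw [arrowPoly, eval_iterate_derivative_C_mul_map_sub,
    ← factorial_smul_pPoly r r₀₀ x hk1 hkn, nsmul_eq_mul, Polynomial.map_mul, eval_mul] at h
  exact right_ne_zero_of_mul h

theorem pPoly_real_rooted_general (n k : ℕ) (hk1 : 1 ≤ k) (hkn : k ≤ n)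
    (r₀₀ : ℝ) (r x : Fin n → ℝ) :
    (pPoly n k r₀₀ r x).Splits ∧
      (pPoly n k r₀₀ r x).roots.card = k + 1 := by
  have hsplits : (pPoly n k r₀₀ r x).Splits :=
    splits_of_eval_map_ne_zero_of_im_pos fun z hz => eval_map_pPoly_ne_zero hk1 hkn r₀₀ r x hz
  rw [splits_iff_card_roots.mp hsplits, natDegree_pPoly r r₀₀ x hk1 hkn]
  exact ⟨hsplits, rfl⟩

/-- `p_{k+1}` has only real roots: it splits over `ℝ`,
with `k+1` real roots counted with multiplicity. -/
theorem pPoly_real_rooted (n k : ℕ) (hn : 1 ≤ n) (hk1 : 1 ≤ k) (hkn : k ≤ n)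
    (r₀₀ : ℝ) (r x : Fin n → ℝ) :
    (pPoly n k r₀₀ r x).Splits ∧
      (pPoly n k r₀₀ r x).roots.card = k + 1 :=
  pPoly_real_rooted_general n k hk1 hkn r₀₀ r x
end

section
/- Let n ≥ 1, 1 ≤ k ≤ n, 1 ≤ i ≤ n, and let r₁, …, r_n be real numbers. Then, as an identity of real polynomials in t, q_{i,k}(t) = π_{i,n}^{(n−k)}(t) / (n−k)!, where π_{i,n}^{(n−k)} denotes the (n−k)-th derivative of π_{i,n}. -/
open Polynomial

/-!
Both sides are elementary symmetric functions `e_m` of the linear factors `t + r_j`, `j ≠ i`.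
On the left, `σ_m = e_m + (t + r_i) e_{m-1}` makes the alternating sum telescope to `e_{k-1}`.
On the right, every factor has derivative `1`, so differentiating `e_{m+1}` of `N` factors gives
`(N - m) e_m`; hence the `d`-th derivative of the product `e_N` is `d! e_{N-d}`.
-/

open scoped Nat

namespace Multiset

variable {R : Type*}

section CommSemiring

variable [CommSemiring R]

@[simp]
theorem esymm_zero (s : Multiset R) : s.esymm 0 = 1 := by
  simp [esymm, powersetCard_zero_left]

theorem esymm_card (s : Multiset R) : s.esymm (card s) = s.prod := by
  simp [esymm, powersetCard_self]

theorem esymm_cons_succ (a : R) (s : Multiset R) (m : ℕ) :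
    (a ::ₘ s).esymm (m + 1) = s.esymm (m + 1) + a * s.esymm m := by
  simp [esymm, powersetCard_cons, sum_map_mul_left]

end CommSemiring

theorem esymm_eq_sum_esymm_cons [CommRing R] (a : R) (s : Multiset R) (k : ℕ) :
    s.esymm k = ∑ j ∈ Finset.range (k + 1), (-1) ^ j * (a ::ₘ s).esymm (k - j) * a ^ j := by
  induction k with
  | zero => simp
  | succ k ih =>
    have htail : ∑ j ∈ Finset.range (k + 1),
        (-1) ^ (j + 1) * (a ::ₘ s).esymm (k + 1 - (j + 1)) * a ^ (j + 1) = -a * s.esymm k := by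
      rw [ih, Finset.mul_sum]
      refine Finset.sum_congr rfl fun j _ => ?_
      rw [Nat.add_sub_add_right]
      ring
    rw [Finset.sum_range_succ', htail, Nat.sub_zero, esymm_cons_succ]
    ring

end Multiset

namespace Polynomial

variable {R : Type*} [CommRing R]

theorem derivative_esymm_succ {s : Multiset R[X]} (hs : ∀ p ∈ s, derivative p = 1) (m : ℕ) :
    derivative (s.esymm (m + 1)) = ((Multiset.card s : R[X]) - m) * s.esymm m := by
  induction s using Multiset.induction_on generalizing m with
  | empty => cases m <;> simp [Multiset.esymm, Multiset.powersetCard_zero_right]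
  | cons a s ih =>
    have ha : derivative a = 1 := hs a (Multiset.mem_cons_self a s)
    have ih := ih fun p hp => hs p (Multiset.mem_cons_of_mem hp)
    rcases m with _ | m
    · simp [Multiset.esymm_cons_succ, ih 0, ha]
    · rw [Multiset.esymm_cons_succ, derivative_add, derivative_mul, ih, ih, ha,
        Multiset.esymm_cons_succ, Multiset.card_cons]
      push_cast
      ring

theorem iterate_derivative_prod_eq_factorial_smul_esymm {s : Multiset R[X]}
    (hs : ∀ p ∈ s, derivative p = 1) {d : ℕ} (hd : d ≤ Multiset.card s) :
    derivative^[d] s.prod = d ! • s.esymm (Multiset.card s - d) := by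
  induction d with
  | zero => simp [Multiset.esymm_card]
  | succ d ih =>
    obtain ⟨m, hm⟩ : ∃ m, Multiset.card s - d = m + 1 := ⟨Multiset.card s - d - 1, by omega⟩
    have hcoeff : (Multiset.card s : R[X]) - m = (d + 1 : ℕ) := by
      rw [show Multiset.card s = m + (d + 1) by omega]
      push_cast
      ring
    rw [Function.iterate_succ_apply', ih (by omega), map_nsmul, hm, derivative_esymm_succ hs,
      hcoeff, ← nsmul_eq_mul, smul_smul, show Multiset.card s - (d + 1) = m by omega,
      Nat.factorial_succ, mul_comm]

end Polynomial

open Finset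

section

variable {n : ℕ} (r : Fin n → ℝ)

theorem sigmaTP_eq_esymm (m : ℕ) :
    sigmaTP n r m = (univ.val.map fun j => X + C (r j)).esymm m :=
  (Finset.esymm_map_val _ _ _).symm

theorem qPoly_succ_eq_esymm (i : Fin n) (k : ℕ) :
    qPoly n r i (k + 1) = ((univ.erase i).val.map fun j => X + C (r j)).esymm k := by
  have hcons : (univ.val.map fun j => X + C (r j)) =
      (X + C (r i)) ::ₘ (univ.erase i).val.map fun j => X + C (r j) := by
    rw [← Multiset.map_cons (fun j => X + C (r j)), erase_val, Multiset.cons_erase (mem_univ i)]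
  rw [Multiset.esymm_eq_sum_esymm_cons (X + C (r i)), ← hcons, qPoly]
  refine sum_congr rfl fun j _ => ?_
  rw [sigmaTP_eq_esymm, Nat.add_sub_cancel, smul_eq_C_mul, C_pow, C_neg, C_1, mul_assoc]

end

theorem qPoly_eq_deriv_piIN_general (n k : ℕ) (hk1 : 1 ≤ k) (hkn : k ≤ n)
    (i : Fin n) (r : Fin n → ℝ) :
    qPoly n r i k =
      ((Nat.factorial (n - k) : ℝ))⁻¹ •
        ((fun p => Polynomial.derivative p)^[n - k] (piIN n r i)) := by
  obtain ⟨k, rfl⟩ := Nat.exists_eq_add_of_le' hk1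
  set s := (univ.erase i).val.map fun j => X + C (r j)
  have hs : ∀ p ∈ s, derivative p = 1 := by simp [s]
  have hcard : Multiset.card s = n - 1 := by simp [s]
  have hpi : piIN n r i = s.prod := prod_eq_multiset_prod _ _
  change _ = _ • derivative^[n - (k + 1)] _
  rw [qPoly_succ_eq_esymm, hpi, iterate_derivative_prod_eq_factorial_smul_esymm hs (by omega),
    hcard, show n - 1 - (n - (k + 1)) = k by omega, ← Nat.cast_smul_eq_nsmul ℝ, smul_smul,
    inv_mul_cancel₀ (by positivity), one_smul]

/-- `q_{i,k}(t) = π_{i,n}^{(n−k)}(t) / (n−k)!`. -/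
theorem qPoly_eq_deriv_piIN (n k : ℕ) (hn : 1 ≤ n) (hk1 : 1 ≤ k) (hkn : k ≤ n)
    (i : Fin n) (r : Fin n → ℝ) :
    qPoly n r i k =
      ((Nat.factorial (n - k) : ℝ))⁻¹ •
        ((fun p => Polynomial.derivative p)^[n - k] (piIN n r i)) :=
  qPoly_eq_deriv_piIN_general n k hk1 hkn i r
end

section
/- Let n ≥ 2 and 2 ≤ k ≤ n. Let A be a real symmetric n×n matrix with A ∈ Γ_k^+, let X ∈ ℝ^n, let t > 0, and set E = tA − X⊗X (where X⊗X is the rank-one matrix with entries X_a X_b). If σ_k(E) > 0, then E ∈ Γ_k^+; moreover, for every i with 2 ≤ i ≤ k, σ_{i−1}(E) ≥ σ_i(E) σ_{i−1}(A) / (t σ_i(A)). -/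
open Matrix

/-- `σ_k(A)`: the k-th elementary symmetric function of the eigenvalues of `A`,
defined as `(−1)^k` times the coefficient of `X^(n−k)` in the characteristic polynomial. -/
noncomputable def sigmaMat {n : ℕ} (A : Matrix (Fin n) (Fin n) ℝ) (k : ℕ) : ℝ :=
  (-1 : ℝ) ^ k * A.charpoly.coeff (n - k)

/-- The k-th Newton transform `T_k(A) = Σ_{j=0}^{k} (−1)^j σ_{k−j}(A) A^j`. -/
noncomputable def newtonT {n : ℕ} (A : Matrix (Fin n) (Fin n) ℝ) (k : ℕ) :
    Matrix (Fin n) (Fin n) ℝ :=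
  ∑ j ∈ Finset.range (k + 1), ((-1 : ℝ) ^ j * sigmaMat A (k - j)) • A ^ j

/-- `A ∈ Γ_k^+` iff `σ_j(A) > 0` for all `1 ≤ j ≤ k`. -/
def GammaPlus {n : ℕ} (k : ℕ) (A : Matrix (Fin n) (Fin n) ℝ) : Prop :=
  ∀ j : ℕ, 1 ≤ j → j ≤ k → 0 < sigmaMat A j

/-!
Diagonalise `A = U D Uᵀ` and put `y = Uᵀ X`. Expanding the characteristic polynomial of
`D - y yᵀ` gives `σ_{i+1}(D - y yᵀ) = e_{i+1}(d) - ∑ₐ yₐ² e_i(dₐ')`, where `dₐ'` is `d` with `dₐ`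
removed. Since `e_{i+1}(d) = e_{i+1}(dₐ') + dₐ e_i(dₐ')`, the ratio inequality
`σ_i(B - XXᵀ) σ_{i-1}(B) ≤ σ_{i-1}(B - XXᵀ) σ_i(B)` for symmetric `B` reduces, term by term, to
Newton's inequality `e_{i-2} e_i ≤ e_{i-1}²` for the real tuples `dₐ'`. Newton's inequality itself
follows from Rolle's theorem: derivatives of a real-rooted polynomial are real-rooted, so after
differentiating it is enough to compare the three lowest coefficients of a real-rooted polynomial.
For `B = tA` the ratio inequality is the stated bound, and it carries `σ_k(E) > 0` down to
`σ_1(E) > 0`.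
-/

open Polynomial Finset
open scoped Nat

namespace Multiset

variable {R : Type*}

theorem esymm_cons [CommSemiring R] (x : R) (s : Multiset R) (k : ℕ) :
    (x ::ₘ s).esymm (k + 1) = s.esymm (k + 1) + x * s.esymm k := by
  simp only [esymm, powersetCard_cons, map_add, sum_add, map_map, Function.comp_def, prod_cons,
    sum_map_mul_left]

theorem esymm_eq_zero_of_card_lt [CommSemiring R] {s : Multiset R} {k : ℕ} (h : card s < k) :
    s.esymm k = 0 := by
  simp [esymm, powersetCard_eq_empty _ h]

/-- Only with this sharp constant does the induction on `card u` go through. -/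
theorem esymm_mul_esymm_le_of_card_eq [CommRing R] [LinearOrder R] [IsStrictOrderedRing R]
    (c : ℕ) (u : Multiset R) (hu : card u = c + 2) :
    2 * (c + 2) * (u.esymm c * u.esymm (c + 2)) ≤ (c + 1) * u.esymm (c + 1) ^ 2 := by
  induction c generalizing u with
  | zero =>
    obtain ⟨x, y, rfl⟩ := card_eq_two.mp hu
    have h0 : ({x, y} : Multiset R).esymm 0 = 1 := by simp [esymm]
    rw [h0, insert_eq_cons, zero_add, zero_add, esymm_pair_one, esymm_pair_two]
    push_cast
    nlinarith [sq_nonneg (x - y)]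
  | succ c ih =>
    obtain ⟨x, u, rfl⟩ : ∃ x u', u = x ::ₘ u' := by
      obtain ⟨x, hx⟩ := exists_mem_of_ne_zero (card_pos.mp (by omega : 0 < card u))
      exact ⟨x, exists_cons_of_mem hx⟩
    have hu' : card u = c + 2 := by simpa using hu
    have hvanish : u.esymm (c + 3) = 0 := esymm_eq_zero_of_card_lt (by omega)
    have h := ih u hu'
    simp only [esymm_cons, hvanish, zero_add]
    push_cast
    nlinarith [sq_nonneg ((c + 2 : R) * u.esymm (c + 2) - x * u.esymm (c + 1)),
      mul_nonneg (sq_nonneg x) (sub_nonneg.mpr h)]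

end Multiset

namespace Polynomial.Splits

theorem two_mul_coeff_zero_mul_coeff_two_le {K : Type*} [Field K] [LinearOrder K]
    [IsStrictOrderedRing K] {p : K[X]} (hp : p.Splits) :
    2 * (p.coeff 0 * p.coeff 2) ≤ p.coeff 1 ^ 2 := by
  obtain hdeg | ⟨c, hc⟩ : p.natDegree < 2 ∨ ∃ c, p.natDegree = c + 2 :=
    (lt_or_ge _ _).imp_right fun h => ⟨_, (Nat.sub_add_cancel h).symm⟩
  · simp [coeff_eq_zero_of_natDegree_lt hdeg, sq_nonneg]
  set e : ℕ → K := p.roots.esymm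
  have hcoeff (i : ℕ) (hi : i ≤ 2) :
      p.coeff (2 - i) = p.leadingCoeff * (-1) ^ c * (-1) ^ i * e (c + i) := by
    rw [coeff_eq_esymm_roots_of_splits hp (by omega), hc, show c + 2 - (2 - i) = c + i by omega,
      pow_add, mul_assoc _ ((-1) ^ c)]
  have hroots : 2 * (e c * e (c + 2)) ≤ e (c + 1) ^ 2 := by
    have h := p.roots.esymm_mul_esymm_le_of_card_eq c (by rw [← hc, hp.natDegree_eq_card_roots])
    nlinarith [sq_nonneg (e (c + 1))]
  have h0 := hcoeff 2 le_rfl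
  have h1 := hcoeff 1 (by norm_num)
  have h2 := hcoeff 0 (by norm_num)
  simp only [Nat.sub_self, Nat.sub_zero, add_zero, pow_zero, mul_one] at h0 h1 h2
  rw [h0, h1, h2]
  calc _ = (p.leadingCoeff * (-1) ^ c) ^ 2 * (2 * (e c * e (c + 2))) := by ring
    _ ≤ (p.leadingCoeff * (-1) ^ c) ^ 2 * e (c + 1) ^ 2 := by gcongr
    _ = _ := by ring

theorem derivative {p : ℝ[X]} (hp : p.Splits) : p.derivative.Splits := by
  rw [splits_iff_card_roots] at hp ⊢
  have := p.card_roots_le_derivative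
  have := p.derivative.card_roots'
  have := p.natDegree_derivative_le
  omega

theorem iterate_derivative {p : ℝ[X]} (hp : p.Splits) (k : ℕ) :
    (Polynomial.derivative^[k] p).Splits := by
  induction k with
  | zero => exact hp
  | succ k ih => rw [Function.iterate_succ_apply']; exact ih.derivative

theorem coeff_mul_coeff_le_sq {p : ℝ[X]} (hp : p.Splits) (k : ℕ) :
    p.coeff k * p.coeff (k + 2) ≤ p.coeff (k + 1) ^ 2 := by
  have h := (hp.iterate_derivative k).two_mul_coeff_zero_mul_coeff_two_le
  simp only [coeff_iterate_derivative, zero_add, nsmul_eq_mul, Nat.descFactorial_self,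
    add_comm 1 k, add_comm 2 k] at h
  -- the lowest coefficients of `derivative^[k] p` are `k! a`, `(k+1)! b` and `(k+2)!/2 c`
  have hd1 : ((k + 1).descFactorial k : ℝ) = (k + 1) * k ! := by
    have := Nat.succ_descFactorial k k
    rw [Nat.add_sub_cancel_left, one_mul, Nat.descFactorial_self] at this
    exact_mod_cast this
  have hd2 : 2 * ((k + 2).descFactorial k : ℝ) = (k + 2) * (k + 1) * k ! := by
    have := Nat.succ_descFactorial (k + 1) k
    rw [show k + 1 + 1 - k = 2 by omega] at this
    rw [mul_assoc, ← hd1]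
    exact_mod_cast this
  set a := p.coeff k
  set b := p.coeff (k + 1)
  set c := p.coeff (k + 2)
  have hF : 0 < (k ! : ℝ) ^ 2 * (k + 1) := by positivity
  have hscaled : (k + 2) * (a * c) ≤ (k + 1) * b ^ 2 := by
    refine le_of_mul_le_mul_left ?_ hF
    rw [hd1] at h
    linear_combination h - (k ! * a * c) * hd2
  rcases le_or_gt (a * c) 0 with hac | hac
  · exact hac.trans (sq_nonneg b)
  · nlinarith

end Polynomial.Splits

namespace Multiset

theorem esymm_mul_esymm_le_sq (s : Multiset ℝ) (j : ℕ) :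
    s.esymm j * s.esymm (j + 2) ≤ s.esymm (j + 1) ^ 2 := by
  obtain hcard | ⟨r, hr⟩ : card s < j + 2 ∨ ∃ r, card s = r + (j + 2) :=
    (lt_or_ge _ _).imp_right fun h => ⟨_, (Nat.sub_add_cancel h).symm⟩
  · simp [esymm_eq_zero_of_card_lt hcard, sq_nonneg]
  have hsplits : (s.map (X + C ·)).prod.Splits :=
    Splits.multisetProd (by simp [Splits.X_add_C])
  have hcoeff (i : ℕ) (hi : i ≤ 2) :
      (s.map (X + C ·)).prod.coeff (r + i) = s.esymm (j + 2 - i) := by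
    rw [prod_X_add_C_coeff s (by omega), hr]
    congr 1
    omega
  have h := hsplits.coeff_mul_coeff_le_sq r
  have h0 := hcoeff 0 (by norm_num)
  have h1 := hcoeff 1 (by norm_num)
  have h2 := hcoeff 2 le_rfl
  simp only [add_zero, Nat.sub_zero, Nat.add_sub_cancel] at h0 h1 h2
  rw [h0, h1, h2, mul_comm] at h
  exact h

theorem esymm_cons_mul_esymm_le (x : ℝ) (s : Multiset ℝ) (j : ℕ) :
    (x ::ₘ s).esymm (j + 2) * s.esymm j ≤ (x ::ₘ s).esymm (j + 1) * s.esymm (j + 1) := by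
  rw [esymm_cons, esymm_cons]
  linear_combination s.esymm_mul_esymm_le_sq j

end Multiset

theorem Finset.prod_X_sub_C_coeff {R ι : Type*} [CommRing R] (s : Finset ι) (d : ι → R) {i : ℕ}
    (hi : i ≤ #s) :
    (∏ a ∈ s, (X - C (d a))).coeff (#s - i) = (-1) ^ i * (s.val.map d).esymm i := by
  have hmap : s.val.map (fun a => X - C (d a)) = (s.val.map d).map (fun r => X - C r) := by
    simp [Multiset.map_map]
  rw [prod_eq_multiset_prod, hmap, Multiset.prod_X_sub_C_coeff _ (by simp)]
  simp [Nat.sub_sub_self hi]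

namespace Matrix

variable {K : Type*} [Field K] {m : Type*} [Fintype m] [DecidableEq m]

theorem det_diagonal_add_vecMulVec {f : m → K} (hf : ∀ a, f a ≠ 0) (u v : m → K) :
    det (diagonal f + vecMulVec u v) = ∏ a, f a + ∑ a, u a * v a * ∏ b ∈ univ.erase a, f b := by
  have hdet : IsUnit (diagonal f).det := by
    rw [det_diagonal]
    exact (prod_ne_zero_iff.mpr fun a _ => hf a).isUnit
  have hinv : (diagonal f)⁻¹ = diagonal fun a => (f a)⁻¹ := by
    refine inv_eq_right_inv ?_
    simp [diagonal_mul_diagonal, hf]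
  rw [vecMulVec_eq Unit, det_add_replicateCol_mul_replicateRow hdet, det_diagonal, hinv, det_unique]
  simp only [add_apply, one_apply_eq, mul_apply, replicateRow_apply, replicateCol_apply,
    diagonal_apply, mul_ite, mul_zero, sum_ite_eq', mem_univ, if_true]
  rw [mul_add, mul_one, mul_sum]
  congr 1
  refine sum_congr rfl fun a _ => ?_
  rw [← mul_prod_erase univ f (mem_univ a)]
  field_simp [hf a]

theorem charpoly_diagonal_sub_vecMulVec [Infinite K] (d u v : m → K) :
    (diagonal d - vecMulVec u v).charpoly =
      ∏ a, (X - C (d a)) + ∑ a, C (u a * v a) * ∏ b ∈ univ.erase a, (X - C (d b)) := by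
  refine eq_of_infinite_eval_eq _ _ ((Set.finite_range d).infinite_compl.mono fun x hx => ?_)
  have hx' : ∀ a, x - d a ≠ 0 := fun a h => hx ⟨a, (sub_eq_zero.mp h).symm⟩
  have hcharmatrix : (charmatrix (diagonal d - vecMulVec u v)).map (eval x) =
      diagonal (fun a => x - d a) + vecMulVec u v := by
    ext i j
    by_cases h : i = j <;> simp [h, vecMulVec_apply, sub_add]
  simp only [Set.mem_ofPred_eq, charpoly, ← coe_evalRingHom, RingHom.map_det,
    RingHom.mapMatrix_apply]
  rw [coe_evalRingHom, hcharmatrix, det_diagonal_add_vecMulVec hx']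
  simp [eval_prod, eval_finsetSum]

end Matrix

variable {n : ℕ}

theorem sigmaMat_eq_sum_det_submatrix (A : Matrix (Fin n) (Fin n) ℝ) {k : ℕ} (hk : k ≤ n) :
    sigmaMat A k =
      ∑ s ∈ univ.powersetCard k, (A.submatrix (Subtype.val : s → Fin n) Subtype.val).det := by
  have h := A.charpoly_coeff_eq_sum_minors k (by simpa using hk)
  rw [Fintype.card_fin] at h
  rw [sigmaMat, h, ← mul_assoc, ← mul_pow]
  norm_num

theorem sigmaMat_smul (t : ℝ) (A : Matrix (Fin n) (Fin n) ℝ) {k : ℕ} (hk : k ≤ n) :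
    sigmaMat (t • A) k = t ^ k * sigmaMat A k := by
  rw [sigmaMat_eq_sum_det_submatrix _ hk, sigmaMat_eq_sum_det_submatrix _ hk, mul_sum]
  refine sum_congr rfl fun s hs => ?_
  rw [show (t • A).submatrix (Subtype.val : s → Fin n) Subtype.val = t • A.submatrix _ _ from rfl,
    det_smul, Fintype.card_coe, (mem_powersetCard.mp hs).2]

theorem sigmaMat_diagonal (d : Fin n → ℝ) {i : ℕ} (hi : i ≤ n) :
    sigmaMat (diagonal d) i = (univ.val.map d).esymm i := by
  have h := (univ : Finset (Fin n)).prod_X_sub_C_coeff d (i := i) (by simpa using hi)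
  rw [card_univ, Fintype.card_fin] at h
  rw [sigmaMat, charpoly_diagonal, h, ← mul_assoc, ← mul_pow]
  norm_num

theorem sigmaMat_diagonal_sub_vecMulVec (d u v : Fin n → ℝ) {i : ℕ} (hi : i + 1 ≤ n) :
    sigmaMat (diagonal d - vecMulVec u v) (i + 1) =
      (univ.val.map d).esymm (i + 1) - ∑ a, u a * v a * ((univ.erase a).val.map d).esymm i := by
  have hfull := (univ : Finset (Fin n)).prod_X_sub_C_coeff d (i := i + 1) (by simpa using hi)
  have herase (a : Fin n) := (univ.erase a).prod_X_sub_C_coeff d (i := i) (by simp; omega)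
  simp only [card_univ, Fintype.card_fin, card_erase_of_mem (mem_univ _),
    show n - 1 - i = n - (i + 1) by omega] at hfull herase
  rw [sigmaMat, charpoly_diagonal_sub_vecMulVec, coeff_add, finsetSum_coeff, hfull]
  simp only [coeff_C_mul, herase, mul_add, mul_sum]
  rw [sub_eq_add_neg, ← sum_neg_distrib]
  congr 1
  · rw [← mul_assoc, ← mul_pow]; norm_num
  · refine sum_congr rfl fun a _ => ?_
    have hsq : (-1 : ℝ) ^ i * (-1) ^ i = 1 := by rw [← mul_pow]; norm_num
    rw [pow_succ]
    linear_combination (-(u a * v a * ((univ.erase a).val.map d).esymm i)) * hsq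

theorem sigmaMat_diagonal_sub_vecMulVec_mul_le (d y : Fin n → ℝ) {j : ℕ} (hj : j + 2 ≤ n) :
    sigmaMat (diagonal d - vecMulVec y y) (j + 2) * sigmaMat (diagonal d) (j + 1) ≤
      sigmaMat (diagonal d - vecMulVec y y) (j + 1) * sigmaMat (diagonal d) (j + 2) := by
  rw [sigmaMat_diagonal_sub_vecMulVec d y y hj, sigmaMat_diagonal_sub_vecMulVec d y y (by omega),
    sigmaMat_diagonal d (by omega), sigmaMat_diagonal d hj]
  have hterm (a : Fin n) :
      y a * y a * ((univ.erase a).val.map d).esymm j * (univ.val.map d).esymm (j + 2) ≤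
        y a * y a * ((univ.erase a).val.map d).esymm (j + 1) * (univ.val.map d).esymm (j + 1) := by
    have hcons : univ.val.map d = d a ::ₘ (univ.erase a).val.map d := by
      rw [← Multiset.map_cons, erase_val, Multiset.cons_erase (mem_univ a)]
    have h := Multiset.esymm_cons_mul_esymm_le (d a) ((univ.erase a).val.map d) j
    rw [hcons]
    calc _ = y a * y a * ((d a ::ₘ (univ.erase a).val.map d).esymm (j + 2) *
          ((univ.erase a).val.map d).esymm j) := by ring
      _ ≤ y a * y a * ((d a ::ₘ (univ.erase a).val.map d).esymm (j + 1) *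
          ((univ.erase a).val.map d).esymm (j + 1)) :=
          mul_le_mul_of_nonneg_left h (mul_self_nonneg _)
      _ = _ := by ring
  have hsum := sum_le_sum fun a (_ : a ∈ univ) => hterm a
  rw [← sum_mul, ← sum_mul] at hsum
  linarith

theorem sigmaMat_unitary_conj {U : Matrix (Fin n) (Fin n) ℝ} (hU : U ∈ unitaryGroup (Fin n) ℝ)
    (M : Matrix (Fin n) (Fin n) ℝ) (i : ℕ) : sigmaMat (U * M * star U) i = sigmaMat M i := by
  rw [sigmaMat, sigmaMat, charpoly_mul_comm, ← mul_assoc, Unitary.star_mul_self_of_mem hU, one_mul]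

theorem sigmaMat_sub_vecMulVec_mul_le {B : Matrix (Fin n) (Fin n) ℝ} (hB : B.IsSymm)
    (x : Fin n → ℝ) {j : ℕ} (hj : j + 2 ≤ n) :
    sigmaMat (B - vecMulVec x x) (j + 2) * sigmaMat B (j + 1) ≤
      sigmaMat (B - vecMulVec x x) (j + 1) * sigmaMat B (j + 2) := by
  have hH : B.IsHermitian := isHermitian_iff_isSymm.mpr hB
  obtain ⟨U, hU, d, rfl⟩ : ∃ U ∈ unitaryGroup (Fin n) ℝ, ∃ d, B = U * diagonal d * star U :=
    ⟨_, hH.eigenvectorUnitary.2, hH.eigenvalues, by simpa using hH.spectral_theorem⟩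
  set y := star U *ᵥ x
  have hx : vecMulVec x x = U * vecMulVec y y * star U := by
    have hUy : U *ᵥ y = x := by rw [mulVec_mulVec, Unitary.mul_star_self_of_mem hU, one_mulVec]
    rw [mul_vecMulVec, vecMulVec_mul, star_eq_conjTranspose, conjTranspose_eq_transpose_of_trivial,
      vecMul_transpose, hUy]
  rw [hx, ← Matrix.sub_mul, ← Matrix.mul_sub, sigmaMat_unitary_conj hU, sigmaMat_unitary_conj hU,
    sigmaMat_unitary_conj hU, sigmaMat_unitary_conj hU]
  exact sigmaMat_diagonal_sub_vecMulVec_mul_le _ _ hj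

theorem E_in_GammaPlus_general (n k : ℕ) (hkn : k ≤ n)
    (A : Matrix (Fin n) (Fin n) ℝ) (hA : A.IsSymm) (hAG : GammaPlus k A)
    (X : Fin n → ℝ) (t : ℝ) (ht : 0 < t)
    (hE : 0 < sigmaMat (t • A - Matrix.vecMulVec X X) k) :
    GammaPlus k (t • A - Matrix.vecMulVec X X) ∧
      ∀ i : ℕ, 2 ≤ i → i ≤ k →
        sigmaMat (t • A - Matrix.vecMulVec X X) i * sigmaMat A (i - 1) /
            (t * sigmaMat A i) ≤
          sigmaMat (t • A - Matrix.vecMulVec X X) (i - 1) := by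
  set E := t • A - vecMulVec X X
  have hratio (j : ℕ) (hj : j + 2 ≤ k) :
      sigmaMat E (j + 2) * sigmaMat A (j + 1) ≤ sigmaMat E (j + 1) * (t * sigmaMat A (j + 2)) := by
    have h := sigmaMat_sub_vecMulVec_mul_le (hA.smul t) X (hj.trans hkn)
    rw [sigmaMat_smul t A (by omega), sigmaMat_smul t A (by omega), pow_succ t (j + 1)] at h
    refine le_of_mul_le_mul_right ?_ (pow_pos ht (j + 1))
    linear_combination h
  have hEG : GammaPlus k E := fun j hj1 hjk => by
    refine Nat.decreasingInduction' (fun i hik _ hpos => ?_) hjk hE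
    obtain ⟨i, rfl⟩ : ∃ i', i = i' + 1 := ⟨i - 1, by omega⟩
    have h := hratio i hik
    have hA1 := hAG (i + 1) (by omega) hik.le
    have hA2 := hAG (i + 2) (by omega) hik
    nlinarith [mul_pos hpos hA1, mul_pos ht hA2]
  refine ⟨hEG, fun i hi hik => ?_⟩
  obtain ⟨j, rfl⟩ : ∃ j, i = j + 2 := ⟨i - 2, by omega⟩
  rw [div_le_iff₀ (mul_pos ht (hAG _ (by omega) hik))]
  exact hratio j hik

/-- if `A ∈ Γ_k^+`, `t > 0`, `E = tA − X⊗X` and `σ_k(E) > 0`, then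
`E ∈ Γ_k^+` and `σ_{i−1}(E) ≥ σ_i(E) σ_{i−1}(A) / (t σ_i(A))` for `2 ≤ i ≤ k`. -/
theorem E_in_GammaPlus (n k : ℕ) (hn : 2 ≤ n) (hk2 : 2 ≤ k) (hkn : k ≤ n)
    (A : Matrix (Fin n) (Fin n) ℝ) (hA : A.IsSymm) (hAG : GammaPlus k A)
    (X : Fin n → ℝ) (t : ℝ) (ht : 0 < t)
    (hE : 0 < sigmaMat (t • A - Matrix.vecMulVec X X) k) :
    GammaPlus k (t • A - Matrix.vecMulVec X X) ∧
      ∀ i : ℕ, 2 ≤ i → i ≤ k →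
        sigmaMat (t • A - Matrix.vecMulVec X X) i * sigmaMat A (i - 1) /
            (t * sigmaMat A i) ≤
          sigmaMat (t • A - Matrix.vecMulVec X X) (i - 1) :=
  E_in_GammaPlus_general n k hkn A hA hAG X t ht hE
end

section
/- Let n ≥ 2 and let λ = (λ₁,…,λ_n) ∈ ℝ^n. Then for every index l ∈ {1,…,n} and every i with 2 ≤ i ≤ n, σ_{i−1}(λ) σ_{i−1}(λ|l) − σ_i(λ) σ_{i−2}(λ|l) ≥ 0. -/
/-- The k-th elementary symmetric polynomial of `λ = (λ₁,…,λ_n)` (with `σ_0 = 1`). -/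
def esym (n : ℕ) (k : ℕ) (lam : Fin n → ℝ) : ℝ :=
  ∑ s ∈ Finset.powersetCard k (Finset.univ : Finset (Fin n)), ∏ i ∈ s, lam i

open Polynomial Finset

noncomputable def polOf {m : ℕ} (x : Fin m → ℝ) : ℝ[X] := ∏ i, (X + C (x i))

lemma esym_eq_coeff {m k : ℕ} (x : Fin m → ℝ) (h : k ≤ m) :
    esym m k x = (polOf x).coeff (m - k) := by
  rw [polOf, Finset.prod_X_add_C_coeff (univ : Finset (Fin m)) x
      (by simp [Nat.sub_le] : m - k ≤ #(univ : Finset (Fin m)))]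
  have h2 : #(univ : Finset (Fin m)) - (m - k) = k := by
    simp only [card_univ, Fintype.card_fin]; omega
  rw [h2, esym]

lemma esym_eq_esymm (m k : ℕ) (x : Fin m → ℝ) :
    esym m k x = (Finset.univ.val.map x).esymm k := by
  rw [esym, Finset.esymm_map_val]


lemma exists_deriv (m : ℕ) (s : Multiset ℝ) (hs : Multiset.card s = m + 1) :
    ∃ t : Multiset ℝ, Multiset.card t = m ∧
      ∀ j, j ≤ m → ((m : ℝ) + 1) * t.esymm j = ((m + 1 - j : ℕ) : ℝ) * s.esymm j := by
  set f : ℝ[X] := (s.map fun a => X + C a).prod with hf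
  have hf2 : f = ((s.map fun a => -a).map fun a => X - C a).prod := by
    rw [Multiset.map_map]
    exact congrArg _ (Multiset.map_congr rfl fun a _ => by
      simp [sub_eq_add_neg])
  have hroots : f.roots = s.map fun a => -a := by
    rw [hf2, roots_multiset_prod_X_sub_C]
  have hcard : Multiset.card f.roots = m + 1 := by rw [hroots]; simpa using hs
  have hmonic : f.Monic := monic_multiset_prod_of_monic _ _ fun a _ => monic_X_add_C _
  have hdeg : f.natDegree = m + 1 := by
    rw [hf2, natDegree_multiset_prod_X_sub_C_eq_card]; simpa using hs
  set g := derivative f with hg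
  have hgdeg : g.natDegree ≤ m := by
    have h := natDegree_derivative_le f
    rw [← hg] at h
    omega
  have hgroots_ge : m ≤ Multiset.card g.roots := by
    have h := card_roots_le_derivative f
    rw [← hg] at h
    omega
  have hgroots : Multiset.card g.roots = m :=
    le_antisymm (le_trans (card_roots' g) hgdeg) hgroots_ge
  have hgdeg' : g.natDegree = m :=
    le_antisymm hgdeg (le_trans hgroots_ge (card_roots' g))
  have hlead : g.coeff m = (m : ℝ) + 1 := by
    rw [hg, coeff_derivative]
    have h1 : f.coeff (m + 1) = 1 := by
      have := hmonic.coeff_natDegree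
      rwa [hdeg] at this
    rw [h1, one_mul]
  have hglead : g.leadingCoeff = (m : ℝ) + 1 := by rw [leadingCoeff, hgdeg', hlead]
  have hprod : C g.leadingCoeff * (g.roots.map fun a => X - C a).prod = g :=
    C_leadingCoeff_mul_prod_multiset_X_sub_C (by rw [hgroots, hgdeg'])
  refine ⟨g.roots.map fun a => -a, by simpa using hgroots, fun j hj => ?_⟩
  have ht' : Multiset.card (g.roots.map fun a => -a) = m := by
    rw [Multiset.card_map, hgroots]
  have hco := Multiset.prod_X_add_C_coeff (g.roots.map fun a => -a)
      (k := m - j) (by rw [ht']; omega)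
  rw [ht', show m - (m - j) = j by omega] at hco
  have hprodeq : (g.roots.map fun a => X - C a).prod
      = ((g.roots.map fun a => -a).map fun a => X + C a).prod := by
    rw [Multiset.map_map]
    exact congrArg _ (Multiset.map_congr rfl fun a _ => by simp [sub_eq_add_neg])
  have e1 : g.coeff (m - j) = ((m : ℝ) + 1) * ((g.roots.map fun a => -a).esymm j) := by
    calc g.coeff (m - j)
        = (C g.leadingCoeff * (g.roots.map fun a => X - C a).prod).coeff (m - j) := by
          rw [hprod]
      _ = ((m : ℝ) + 1) * ((g.roots.map fun a => X - C a).prod.coeff (m - j)) := by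
          rw [coeff_C_mul, hglead]
      _ = ((m : ℝ) + 1) * ((g.roots.map fun a => -a).esymm j) := by rw [hprodeq, hco]
  have e2 : g.coeff (m - j) = ((m + 1 - j : ℕ) : ℝ) * s.esymm j := by
    rw [hg, coeff_derivative, show m - j + 1 = (m + 1) - j by omega]
    have hco2 := Multiset.prod_X_add_C_coeff s (k := (m + 1) - j) (by rw [hs]; omega)
    rw [hs, show (m + 1) - ((m + 1) - j) = j by omega] at hco2
    rw [← hf] at hco2
    rw [hco2]
    have hc : ((m - j : ℕ) : ℝ) + 1 = ((m + 1 - j : ℕ) : ℝ) := by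
      rw [Nat.cast_sub hj, Nat.cast_sub (by omega : j ≤ m + 1)]
      push_cast; ring
    rw [← hc]; ring
  exact e1.symm.trans e2


lemma exists_tuple {m : ℕ} (s : Multiset ℝ) (h : Multiset.card s = m) :
    ∃ y : Fin m → ℝ, Finset.univ.val.map y = s := by
  subst h
  refine ⟨fun i => s.toList.get (Fin.cast (s.length_toList).symm i), ?_⟩
  rw [Fin.univ_val_map]
  conv_rhs => rw [← s.coe_toList]
  congr 1
  rw [← List.ofFn_congr (s.length_toList) s.toList.get]
  exact List.ofFn_get s.toList

lemma base_ineq : ∀ (r : ℕ) (x : Fin (r + 2) → ℝ),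
    2 * ((r : ℝ) + 2) * ((polOf x).coeff 0 * (polOf x).coeff 2) ≤
      ((r : ℝ) + 1) * (polOf x).coeff 1 ^ 2 := by
  intro r
  induction r with
  | zero =>
    intro x
    have e : polOf x = X ^ 2 + C (x 0 + x 1) * X + C (x 0 * x 1) := by
      rw [polOf, Fin.prod_univ_two, C_add, C_mul]; ring
    rw [e]
    simp only [coeff_add, coeff_X_pow, coeff_C_mul, coeff_X_zero, coeff_X_one, coeff_C, coeff_X]
    norm_num
    nlinarith [sq_nonneg (x 0 - x 1)]
  | succ r ih =>
    intro x
    have hsplit : polOf x = polOf (fun i : Fin (r + 2) => x i.castSucc) * (X + C (x (Fin.last _))) := by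
      rw [polOf, polOf, Fin.prod_univ_castSucc]
    set g := polOf (fun i : Fin (r + 2) => x i.castSucc) with hgdef
    set a := x (Fin.last (r + 2)) with hadef
    have hexp : polOf x = g * X + g * C a := by rw [hsplit]; ring
    have c0 : (polOf x).coeff 0 = g.coeff 0 * a := by
      rw [hexp, coeff_add, coeff_mul_C, mul_coeff_zero, coeff_X_zero, mul_zero, zero_add]
    have c1 : (polOf x).coeff 1 = g.coeff 0 + g.coeff 1 * a := by
      rw [hexp, coeff_add, coeff_mul_C, coeff_mul_X]
    have c2 : (polOf x).coeff 2 = g.coeff 1 + g.coeff 2 * a := by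
      rw [hexp, coeff_add, coeff_mul_C, coeff_mul_X]
    have ihx := ih fun i => x i.castSucc
    rw [← hgdef] at ihx
    rw [c0, c1, c2]
    set p0 := g.coeff 0
    set p1 := g.coeff 1
    set p2 := g.coeff 2
    have h1 : 0 ≤ a ^ 2 * (((r : ℝ) + 1) * p1 ^ 2 - 2 * ((r : ℝ) + 2) * (p0 * p2)) :=
      mul_nonneg (sq_nonneg a) (by linarith)
    have key : ((r : ℝ) + 2) * (((r : ℝ) + 2) * (p0 + p1 * a) ^ 2
          - 2 * ((r : ℝ) + 3) * ((p0 * a) * (p1 + p2 * a)))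
        = (((r : ℝ) + 2) * p0 - a * p1) ^ 2
          + ((r : ℝ) + 3) * (a ^ 2 * (((r : ℝ) + 1) * p1 ^ 2 - 2 * ((r : ℝ) + 2) * (p0 * p2))) := by
      ring
    have h2 : 0 ≤ ((r : ℝ) + 2) * (((r : ℝ) + 2) * (p0 + p1 * a) ^ 2
          - 2 * ((r : ℝ) + 3) * ((p0 * a) * (p1 + p2 * a))) := by
      rw [key]
      have := sq_nonneg (((r : ℝ) + 2) * p0 - a * p1)
      nlinarith
    have h3 : 0 ≤ ((r : ℝ) + 2) * (p0 + p1 * a) ^ 2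
          - 2 * ((r : ℝ) + 3) * ((p0 * a) * (p1 + p2 * a)) := by
      have hpos : (0 : ℝ) < (r : ℝ) + 2 := by positivity
      exact nonneg_of_mul_nonneg_right h2 hpos
    push_cast
    linarith

lemma newton_norm : ∀ (m : ℕ) (x : Fin m → ℝ) (j : ℕ), j + 2 ≤ m →
    ((m.choose (j + 1) : ℝ)) ^ 2 * (esym m j x * esym m (j + 2) x) ≤
      ((m.choose j : ℝ) * (m.choose (j + 2) : ℝ)) * esym m (j + 1) x ^ 2 := by
  intro m
  induction m with
  | zero => intro x j h; omega
  | succ m ih =>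
    intro x j h
    rcases Nat.lt_or_ge (j + 2) (m + 1) with hlt | hge
    · -- derivative step
      obtain ⟨t, ht, hrel⟩ := exists_deriv m (Finset.univ.val.map x) (by simp)
      obtain ⟨y, hy⟩ := exists_tuple t ht
      have hrw : ∀ i, i ≤ m →
          ((m : ℝ) + 1) * esym m i y = ((m + 1 - i : ℕ) : ℝ) * esym (m + 1) i x := by
        intro i hi
        rw [esym_eq_esymm m i y, hy, esym_eq_esymm (m + 1) i x]
        exact hrel i hi
      have r0 := hrw j (by omega)
      have r1 := hrw (j + 1) (by omega)
      have r2 := hrw (j + 2) (by omega)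
      have ihy := ih y j (by omega)
      have step : ((m.choose (j + 1) : ℝ)) ^ 2 *
            ((((m + 1 - j : ℕ) : ℝ) * esym (m + 1) j x) *
              (((m + 1 - (j + 2) : ℕ) : ℝ) * esym (m + 1) (j + 2) x)) ≤
          ((m.choose j : ℝ) * (m.choose (j + 2) : ℝ)) *
            (((m + 1 - (j + 1) : ℕ) : ℝ) * esym (m + 1) (j + 1) x) ^ 2 := by
        have hmul := mul_le_mul_of_nonneg_left ihy
          (show (0 : ℝ) ≤ ((m : ℝ) + 1) ^ 2 by positivity)
        calc ((m.choose (j + 1) : ℝ)) ^ 2 *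
              ((((m + 1 - j : ℕ) : ℝ) * esym (m + 1) j x) *
                (((m + 1 - (j + 2) : ℕ) : ℝ) * esym (m + 1) (j + 2) x))
            = ((m : ℝ) + 1) ^ 2 * (((m.choose (j + 1) : ℝ)) ^ 2 * (esym m j y * esym m (j + 2) y)) := by
              rw [← r0, ← r2]; ring
          _ ≤ ((m : ℝ) + 1) ^ 2 * (((m.choose j : ℝ) * (m.choose (j + 2) : ℝ)) * esym m (j + 1) y ^ 2) := hmul
          _ = ((m.choose j : ℝ) * (m.choose (j + 2) : ℝ)) *
              (((m + 1 - (j + 1) : ℕ) : ℝ) * esym (m + 1) (j + 1) x) ^ 2 := by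
              rw [← r1]; ring
      have k1 : (m.choose j : ℝ) * ((m : ℝ) + 1)
          = ((m + 1).choose j : ℝ) * ((m + 1 - j : ℕ) : ℝ) := by
        exact_mod_cast Nat.choose_mul_succ_eq m j
      have k2 : (m.choose (j + 1) : ℝ) * ((m : ℝ) + 1)
          = ((m + 1).choose (j + 1) : ℝ) * ((m + 1 - (j + 1) : ℕ) : ℝ) := by
        exact_mod_cast Nat.choose_mul_succ_eq m (j + 1)
      have k3 : (m.choose (j + 2) : ℝ) * ((m : ℝ) + 1)
          = ((m + 1).choose (j + 2) : ℝ) * ((m + 1 - (j + 2) : ℕ) : ℝ) := by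
        exact_mod_cast Nat.choose_mul_succ_eq m (j + 2)
      have hident : ((m + 1).choose j : ℝ) * ((m + 1).choose (j + 2) : ℝ) *
            ((m.choose (j + 1) : ℝ) ^ 2 * ((m + 1 - j : ℕ) : ℝ) * ((m + 1 - (j + 2) : ℕ) : ℝ)) =
          (m.choose j : ℝ) * (m.choose (j + 2) : ℝ) * ((m + 1 - (j + 1) : ℕ) : ℝ) ^ 2 *
            ((m + 1).choose (j + 1) : ℝ) ^ 2 := by
        linear_combination
          (-(((m + 1 - (j + 2) : ℕ) : ℝ) * ((m + 1).choose (j + 2) : ℝ) * (m.choose (j + 1) : ℝ) ^ 2)) * k1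
          + (-((((m : ℝ) + 1)) * (m.choose j : ℝ) * (m.choose (j + 1) : ℝ) ^ 2)) * k3
          + ((m.choose j : ℝ) * (m.choose (j + 2) : ℝ) *
              (((m + 1 - (j + 1) : ℕ) : ℝ) * ((m + 1).choose (j + 1) : ℝ)
                + ((m : ℝ) + 1) * (m.choose (j + 1) : ℝ))) * k2
      have hqpos : (0 : ℝ) < (m.choose (j + 1) : ℝ) ^ 2 * ((m + 1 - j : ℕ) : ℝ) *
          ((m + 1 - (j + 2) : ℕ) : ℝ) := by
        have h1 : (0 : ℝ) < (m.choose (j + 1) : ℝ) := by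
          exact_mod_cast Nat.choose_pos (show j + 1 ≤ m by omega)
        have h2 : (0 : ℝ) < ((m + 1 - j : ℕ) : ℝ) := by
          exact_mod_cast Nat.pos_of_ne_zero (by omega)
        have h3 : (0 : ℝ) < ((m + 1 - (j + 2) : ℕ) : ℝ) := by
          exact_mod_cast Nat.pos_of_ne_zero (by omega)
        positivity
      refine le_of_mul_le_mul_left ?_ hqpos
      calc (m.choose (j + 1) : ℝ) ^ 2 * ((m + 1 - j : ℕ) : ℝ) * ((m + 1 - (j + 2) : ℕ) : ℝ) *
            (((m + 1).choose (j + 1) : ℝ) ^ 2 * (esym (m + 1) j x * esym (m + 1) (j + 2) x))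
          = ((m + 1).choose (j + 1) : ℝ) ^ 2 *
            (((m.choose (j + 1) : ℝ)) ^ 2 *
              ((((m + 1 - j : ℕ) : ℝ) * esym (m + 1) j x) *
                (((m + 1 - (j + 2) : ℕ) : ℝ) * esym (m + 1) (j + 2) x))) := by
            ring
        _ ≤ ((m + 1).choose (j + 1) : ℝ) ^ 2 *
            (((m.choose j : ℝ) * (m.choose (j + 2) : ℝ)) *
              (((m + 1 - (j + 1) : ℕ) : ℝ) * esym (m + 1) (j + 1) x) ^ 2) :=
            mul_le_mul_of_nonneg_left step (sq_nonneg _)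
        _ = (m.choose (j + 1) : ℝ) ^ 2 * ((m + 1 - j : ℕ) : ℝ) * ((m + 1 - (j + 2) : ℕ) : ℝ) *
            (((m + 1).choose j : ℝ) * ((m + 1).choose (j + 2) : ℝ) * esym (m + 1) (j + 1) x ^ 2) := by
            linear_combination (-(esym (m + 1) (j + 1) x ^ 2)) * hident
    · -- base case : j + 2 = m + 1
      have hm : m = j + 1 := by omega
      subst hm
      have ej0 : esym (j + 2) j x = (polOf x).coeff 2 := by
        rw [esym_eq_coeff x (by omega), show j + 2 - j = 2 by omega]
      have ej1 : esym (j + 2) (j + 1) x = (polOf x).coeff 1 := by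
        rw [esym_eq_coeff x (by omega), show j + 2 - (j + 1) = 1 by omega]
      have ej2 : esym (j + 2) (j + 2) x = (polOf x).coeff 0 := by
        rw [esym_eq_coeff x (by omega), show j + 2 - (j + 2) = 0 by omega]
      have hc1 : (j + 2).choose (j + 1) = j + 2 := Nat.choose_succ_self_right (j + 1)
      have hc2 : (j + 2).choose (j + 2) = 1 := Nat.choose_self (j + 2)
      have hCj : (((j + 2).choose j : ℕ) : ℝ) = ((j : ℝ) + 2) * ((j : ℝ) + 1) / 2 := by
        have h1 : (j + 2).choose j = (j + 2).choose 2 := by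
          rw [← Nat.choose_symm (by omega : 2 ≤ j + 2), show j + 2 - 2 = j by omega]
        have h2 : (j + 2).choose 2 * 2 = (j + 2) * (j + 1) := by
          rw [Nat.choose_succ_right_eq, Nat.choose_one_right, show j + 2 - 1 = j + 1 by omega]
        have h3 : (((j + 2).choose 2 : ℕ) : ℝ) * 2 = ((j : ℝ) + 2) * ((j : ℝ) + 1) := by
          exact_mod_cast h2
        rw [h1]
        linarith
      show (((j + 2).choose (j + 1) : ℕ) : ℝ) ^ 2 * (esym (j + 2) j x * esym (j + 2) (j + 2) x) ≤
        (((j + 2).choose j : ℕ) : ℝ) * (((j + 2).choose (j + 2) : ℕ) : ℝ) * esym (j + 2) (j + 1) x ^ 2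
      rw [ej0, ej1, ej2, hc1, hc2, hCj]
      have hb := base_ineq j x
      have hmul := mul_le_mul_of_nonneg_left hb (show (0 : ℝ) ≤ ((j : ℝ) + 2) / 2 by positivity)
      push_cast
      linarith

lemma choose_logconcave (n j : ℕ) : n.choose j * n.choose (j + 2) ≤ n.choose (j + 1) ^ 2 := by
  rcases Nat.lt_or_ge n (j + 2) with hlt | hge
  · rw [Nat.choose_eq_zero_of_lt hlt, Nat.mul_zero]
    exact Nat.zero_le _
  · have e1 : n.choose (j + 1) * (j + 1) = n.choose j * (n - j) := Nat.choose_succ_right_eq n j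
    have e2 : n.choose (j + 2) * (j + 2) = n.choose (j + 1) * (n - (j + 1)) :=
      Nat.choose_succ_right_eq n (j + 1)
    have key : (n.choose j * n.choose (j + 2)) * ((j + 1) * (j + 2)) ≤
        n.choose (j + 1) ^ 2 * ((j + 1) * (j + 2)) := by
      calc (n.choose j * n.choose (j + 2)) * ((j + 1) * (j + 2))
          = (n.choose j * (j + 1)) * (n.choose (j + 2) * (j + 2)) := by ring
        _ = (n.choose j * (j + 1)) * (n.choose (j + 1) * (n - (j + 1))) := by rw [e2]
        _ ≤ (n.choose j * (j + 1)) * (n.choose (j + 1) * (n - j)) := by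
            apply Nat.mul_le_mul_left
            apply Nat.mul_le_mul_left
            omega
        _ = (n.choose j * (n - j)) * (n.choose (j + 1) * (j + 1)) := by ring
        _ = (n.choose (j + 1) * (j + 1)) * (n.choose (j + 1) * (j + 1)) := by rw [← e1]
        _ = n.choose (j + 1) ^ 2 * ((j + 1) * (j + 1)) := by ring
        _ ≤ n.choose (j + 1) ^ 2 * ((j + 1) * (j + 2)) := by
            apply Nat.mul_le_mul_left
            apply Nat.mul_le_mul_left
            omega
    exact Nat.le_of_mul_le_mul_right key (by positivity)

lemma newton_raw (m : ℕ) (x : Fin m → ℝ) (j : ℕ) (h : j + 2 ≤ m) :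
    esym m j x * esym m (j + 2) x ≤ esym m (j + 1) x ^ 2 := by
  rcases le_or_gt (esym m j x * esym m (j + 2) x) 0 with h0 | h0
  · exact h0.trans (sq_nonneg _)
  · have hN := newton_norm m x j h
    have hcc : ((m.choose j : ℝ) * (m.choose (j + 2) : ℝ)) ≤ ((m.choose (j + 1) : ℝ)) ^ 2 := by
      exact_mod_cast choose_logconcave m j
    have hpos : (0 : ℝ) < (m.choose j : ℝ) * (m.choose (j + 2) : ℝ) := by
      have h1 : 0 < m.choose j := Nat.choose_pos (by omega)
      have h2 : 0 < m.choose (j + 2) := Nat.choose_pos (by omega)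
      have h1' : (0 : ℝ) < (m.choose j : ℝ) := by exact_mod_cast h1
      have h2' : (0 : ℝ) < (m.choose (j + 2) : ℝ) := by exact_mod_cast h2
      positivity
    have h1 : ((m.choose j : ℝ) * (m.choose (j + 2) : ℝ)) * (esym m j x * esym m (j + 2) x) ≤
        ((m.choose j : ℝ) * (m.choose (j + 2) : ℝ)) * esym m (j + 1) x ^ 2 :=
      calc ((m.choose j : ℝ) * (m.choose (j + 2) : ℝ)) * (esym m j x * esym m (j + 2) x)
          ≤ ((m.choose (j + 1) : ℝ)) ^ 2 * (esym m j x * esym m (j + 2) x) :=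
            mul_le_mul_of_nonneg_right hcc h0.le
        _ ≤ _ := hN
    exact le_of_mul_le_mul_left h1 hpos

lemma sum_powersetCard_insert {n : ℕ} {s : Finset (Fin n)} {a : Fin n} (ha : a ∉ s)
    (f : Fin n → ℝ) (k : ℕ) :
    ∑ t ∈ (insert a s).powersetCard (k + 1), ∏ i ∈ t, f i =
      (∑ t ∈ s.powersetCard (k + 1), ∏ i ∈ t, f i) +
        f a * ∑ t ∈ s.powersetCard k, ∏ i ∈ t, f i := by
  have hdisj : Disjoint (s.powersetCard (k + 1)) ((s.powersetCard k).image (insert a)) := by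
    rw [Finset.disjoint_left]
    intro t ht htimg
    obtain ⟨u, hu, rfl⟩ := Finset.mem_image.mp htimg
    exact ha ((Finset.mem_powersetCard.mp ht).1 (Finset.mem_insert_self a u))
  rw [Finset.powersetCard_succ_insert ha, Finset.sum_union hdisj, Finset.sum_image, Finset.mul_sum]
  · congr 1
    apply Finset.sum_congr rfl
    intro t ht
    rw [Finset.prod_insert fun hat => ha ((Finset.mem_powersetCard.mp ht).1 hat)]
  · intro t ht u hu htu
    have hat : a ∉ t := fun hmem => ha ((Finset.mem_powersetCard.mp ht).1 hmem)
    have hau : a ∉ u := fun hmem => ha ((Finset.mem_powersetCard.mp hu).1 hmem)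
    rw [← Finset.erase_insert hat, ← Finset.erase_insert hau, htu]

lemma esym_update (n : ℕ) (lam : Fin n → ℝ) (l : Fin n) (k : ℕ) :
    esym n k (Function.update lam l 0) =
      ∑ t ∈ (Finset.univ.erase l).powersetCard k, ∏ i ∈ t, lam i := by
  have hprods : ∀ t ∈ (Finset.univ.erase l).powersetCard k,
      (∏ i ∈ t, Function.update lam l 0 i) = ∏ i ∈ t, lam i := by
    intro t ht
    apply Finset.prod_congr rfl
    intro i hi
    exact Function.update_of_ne
      (Finset.ne_of_mem_erase ((Finset.mem_powersetCard.mp ht).1 hi)) _ _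
  cases k with
  | zero => simp [esym]
  | succ k =>
    rw [esym]
    conv_lhs => rw [← Finset.insert_erase (Finset.mem_univ l)]
    rw [sum_powersetCard_insert (Finset.notMem_erase l Finset.univ) _ k,
      Function.update_self, zero_mul, add_zero]
    exact Finset.sum_congr rfl hprods

lemma esym_split (n : ℕ) (lam : Fin n → ℝ) (l : Fin n) (k : ℕ) :
    esym n (k + 1) lam = esym n (k + 1) (Function.update lam l 0)
      + lam l * esym n k (Function.update lam l 0) := by
  rw [esym_update, esym_update]
  conv_lhs => rw [esym, ← Finset.insert_erase (Finset.mem_univ l)]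
  rw [sum_powersetCard_insert (Finset.notMem_erase l Finset.univ) lam k]

/-- `σ_{i−1}(λ) σ_{i−1}(λ|l) − σ_i(λ) σ_{i−2}(λ|l) ≥ 0`, where
`σ_k(λ|l)` is `σ_k` with the `l`-th entry of `λ` replaced by `0`. -/
theorem esym_truncated_inequality (n : ℕ) (hn : 2 ≤ n) (lam : Fin n → ℝ) :
    ∀ l : Fin n, ∀ i : ℕ, 2 ≤ i → i ≤ n →
      0 ≤ esym n (i - 1) lam * esym n (i - 1) (Function.update lam l 0) -
          esym n i lam * esym n (i - 2) (Function.update lam l 0) := by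
  intro l i hi2 hin
  obtain ⟨j, rfl⟩ : ∃ j, i = j + 2 := ⟨i - 2, by omega⟩
  rw [show j + 2 - 1 = j + 1 by omega, show j + 2 - 2 = j by omega]
  have e2 := esym_split n lam l (j + 1)
  have e1 := esym_split n lam l j
  have hN := newton_raw n (Function.update lam l 0) j (by omega)
  rw [e1, e2]
  nlinarith [hN]
end

section
/- Let n ≥ 1 and 1 ≤ k ≤ n. For every real symmetric n×n matrix A and every vector X ∈ ℝ^n, σ_k(A − X⊗X) = σ_k(A) − Xᵀ T_{k−1}(A) X, where X⊗X is the rank-one matrix with entries X_a X_b. -/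
open Matrix

/-!
The characteristic matrix of `A - X Xᵀ` is `tI - A + X Xᵀ`, so by the matrix determinant lemma
over the domain `ℝ[t]` (where `det (tI - A) = χ_A` is monic, hence nonzero)
`χ_{A - X Xᵀ}(t) = χ_A(t) + Xᵀ adj(tI - A) X`. By Cayley–Hamilton, `adj(tI - A)` is the quotient
of `χ_A(t) - χ_A(A)` by `t - A`, and its coefficient of `t^(n-k)` is `(-1)^(k-1) T_{k-1}(A)`.
-/

open Polynomial

namespace Matrix

variable {R ι : Type*} [CommRing R] [Fintype ι] [DecidableEq ι]

theorem det_add_vecMulVec_of_isUnit_det {M : Matrix ι ι R} (hM : IsUnit M.det) (u v : ι → R) :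
    (M + vecMulVec u v).det = M.det + v ⬝ᵥ M.adjugate *ᵥ u := by
  have hadj : M.adjugate = M.det • M⁻¹ := by
    rw [nonsing_inv_apply M hM, smul_smul, IsUnit.mul_val_inv, one_smul]
  rw [vecMulVec_eq Unit, det_add_replicateCol_mul_replicateRow hM,
    det_unique (1 + _), add_apply, one_apply_eq, Matrix.mul_assoc, ← replicateCol_mulVec,
    replicateRow_mul_replicateCol_apply, hadj, smul_mulVec, dotProduct_smul, smul_eq_mul,
    mul_one_add]

theorem det_add_vecMulVec_of_det_ne_zero [IsDomain R] {M : Matrix ι ι R} (hM : M.det ≠ 0)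
    (u v : ι → R) : (M + vecMulVec u v).det = M.det + v ⬝ᵥ M.adjugate *ᵥ u := by
  let f := algebraMap R (FractionRing R)
  have hf : Function.Injective f := IsFractionRing.injective R (FractionRing R)
  have hunit : IsUnit (f.mapMatrix M).det := by
    rw [← RingHom.map_det]
    exact ((map_ne_zero_iff f hf).mpr hM).isUnit
  apply hf
  have hvec : f.mapMatrix (vecMulVec u v) = vecMulVec (f ∘ u) (f ∘ v) := by
    ext i j
    simp [vecMulVec_apply]
  rw [RingHom.map_det, map_add, hvec, det_add_vecMulVec_of_isUnit_det hunit, map_add,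
    RingHom.map_det, RingHom.map_dotProduct, ← RingHom.map_adjugate]
  congr 2
  funext i
  exact (RingHom.map_mulVec f _ u i).symm

/-- The coefficient of `X ^ i` in `adjugate (charmatrix A)`; it comes from writing the adjugate
as the quotient of `χ_A(X) • 1 - χ_A(A)` by `X - A`. -/
noncomputable def adjugateCharmatrixCoeff (A : Matrix ι ι R) (i : ℕ) : Matrix ι ι R :=
  ∑ j ∈ Finset.range (Fintype.card ι - i), A.charpoly.coeff (i + 1 + j) • A ^ j

theorem adjugateCharmatrixCoeff_of_card_le (A : Matrix ι ι R) {i : ℕ}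
    (h : Fintype.card ι ≤ i) : adjugateCharmatrixCoeff A i = 0 := by
  simp [adjugateCharmatrixCoeff, Nat.sub_eq_zero_of_le h]

theorem coeff_charpoly_of_card_lt (A : Matrix ι ι R) {i : ℕ} (h : Fintype.card ι < i) :
    A.charpoly.coeff i = 0 := by
  nontriviality R
  exact coeff_eq_zero_of_natDegree_lt (by rwa [charpoly_natDegree_eq_dim])

theorem adjugateCharmatrixCoeff_eq (A : Matrix ι ι R) (i : ℕ) :
    adjugateCharmatrixCoeff A i =
      A * adjugateCharmatrixCoeff A (i + 1) + A.charpoly.coeff (i + 1) • 1 := by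
  rcases lt_or_ge i (Fintype.card ι) with h | h
  · rw [adjugateCharmatrixCoeff, show Fintype.card ι - i = Fintype.card ι - (i + 1) + 1 by omega,
      Finset.sum_range_succ', adjugateCharmatrixCoeff, Finset.mul_sum]
    congr 1
    refine Finset.sum_congr rfl fun j _ => ?_
    rw [mul_smul_comm, ← pow_succ', show i + 1 + (j + 1) = i + 1 + 1 + j by omega]
  · rw [adjugateCharmatrixCoeff_of_card_le A h, adjugateCharmatrixCoeff_of_card_le A (by omega),
      coeff_charpoly_of_card_lt A (by omega), mul_zero, zero_smul, add_zero]

theorem mul_adjugateCharmatrixCoeff_zero_add (A : Matrix ι ι R) :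
    A * adjugateCharmatrixCoeff A 0 + A.charpoly.coeff 0 • 1 = 0 := by
  have hdeg : A.charpoly.natDegree < Fintype.card ι + 1 := by
    nontriviality R
    rw [charpoly_natDegree_eq_dim]
    omega
  rw [← A.aeval_self_charpoly, aeval_eq_sum_range' hdeg, Finset.sum_range_succ',
    adjugateCharmatrixCoeff, Finset.mul_sum, pow_zero]
  congr 1
  refine Finset.sum_congr rfl fun j _ => ?_
  rw [mul_smul_comm, ← pow_succ', zero_add, add_comm 1 j]

theorem adjugate_charmatrix_eq_of_mul_eq (A : Matrix ι ι R) {B : Matrix ι ι R[X]}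
    (hB : charmatrix A * B = A.charpoly • 1) : adjugate (charmatrix A) = B := by
  refine ((charpoly_monic A).isRegular.left.matrix (m := ι) (n := ι)) ?_
  calc A.charpoly • adjugate (charmatrix A)
      = adjugate (charmatrix A) * (A.charpoly • 1) := by rw [Matrix.mul_smul, Matrix.mul_one]
    _ = A.charpoly • B := by
      rw [← hB, ← Matrix.mul_assoc, adjugate_mul, Matrix.smul_mul, Matrix.one_mul]; rfl

theorem coeff_sum_monomial_adjugateCharmatrixCoeff (A : Matrix ι ι R) (m : ℕ) :
    (∑ i ∈ Finset.range (Fintype.card ι), monomial i (adjugateCharmatrixCoeff A i)).coeff m =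
      adjugateCharmatrixCoeff A m := by
  simp only [finsetSum_coeff, coeff_monomial, Finset.sum_ite_eq', Finset.mem_range]
  split_ifs with h
  · rfl
  · exact (adjugateCharmatrixCoeff_of_card_le A (not_lt.mp h)).symm

theorem charmatrix_mul_adjugateCharmatrixCoeff (A : Matrix ι ι R) :
    charmatrix A * matPolyEquiv.symm
      (∑ i ∈ Finset.range (Fintype.card ι), monomial i (adjugateCharmatrixCoeff A i)) =
      A.charpoly • 1 := by
  apply matPolyEquiv.injective
  rw [map_mul, matPolyEquiv_charmatrix, AlgEquiv.apply_symm_apply, matPolyEquiv_smul_one]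
  ext m : 1
  rw [sub_mul, coeff_sub, coeff_C_mul, coeff_map, Algebra.algebraMap_eq_smul_one]
  cases m with
  | zero =>
    rw [mul_coeff_zero, coeff_X_zero, zero_mul, coeff_sum_monomial_adjugateCharmatrixCoeff,
      zero_sub, neg_eq_iff_add_eq_zero]
    exact mul_adjugateCharmatrixCoeff_zero_add A
  | succ m =>
    rw [coeff_X_mul, coeff_sum_monomial_adjugateCharmatrixCoeff,
      coeff_sum_monomial_adjugateCharmatrixCoeff, adjugateCharmatrixCoeff_eq A m,
      add_sub_cancel_left]

theorem coeff_adjugate_charmatrix (A : Matrix ι ι R) (m : ℕ) (i j : ι) :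
    (adjugate (charmatrix A) i j).coeff m = adjugateCharmatrixCoeff A m i j := by
  rw [adjugate_charmatrix_eq_of_mul_eq A (charmatrix_mul_adjugateCharmatrixCoeff A),
    matPolyEquiv_symm_apply_coeff, coeff_sum_monomial_adjugateCharmatrixCoeff]

theorem charmatrix_sub_vecMulVec (A : Matrix ι ι R) (u v : ι → R) :
    charmatrix (A - vecMulVec u v) = charmatrix A + vecMulVec (C ∘ u) (C ∘ v) := by
  ext i j : 1
  simp only [charmatrix_apply, sub_apply, add_apply, vecMulVec_apply, Function.comp_apply,
    map_sub, map_mul]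
  ring

theorem coeff_charpoly_sub_vecMulVec [IsDomain R] (A : Matrix ι ι R) (u v : ι → R) (m : ℕ) :
    (A - vecMulVec u v).charpoly.coeff m =
      A.charpoly.coeff m + v ⬝ᵥ adjugateCharmatrixCoeff A m *ᵥ u := by
  rw [charpoly, charmatrix_sub_vecMulVec,
    det_add_vecMulVec_of_det_ne_zero (charpoly_monic A).ne_zero, coeff_add]
  congr 1
  simp only [dotProduct, mulVec, finsetSum_coeff, Finset.mul_sum, Function.comp_apply,
    coeff_C_mul, coeff_mul_C, coeff_adjugate_charmatrix]

end Matrix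

theorem adjugateCharmatrixCoeff_eq_newtonT {n : ℕ} (A : Matrix (Fin n) (Fin n) ℝ) {j : ℕ}
    (hj : j < n) : adjugateCharmatrixCoeff A (n - 1 - j) = (-1 : ℝ) ^ j • newtonT A j := by
  rw [adjugateCharmatrixCoeff, newtonT, Finset.smul_sum, Fintype.card_fin,
    show n - (n - 1 - j) = j + 1 by omega]
  refine Finset.sum_congr rfl fun i hi => ?_
  obtain ⟨d, rfl⟩ := Nat.exists_eq_add_of_le (Nat.lt_succ_iff.mp (Finset.mem_range.mp hi))
  have hsign : (-1 : ℝ) ^ (i + d) * ((-1) ^ i * (-1) ^ d) = 1 := by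
    rw [← pow_add, ← pow_add, ← two_mul, pow_mul, neg_one_sq, one_pow]
  rw [smul_smul, sigmaMat, Nat.add_sub_cancel_left,
    show n - 1 - (i + d) + 1 + i = n - d by omega]
  congr 1
  linear_combination (-(A.charpoly.coeff (n - d))) * hsign

theorem sigma_sub_rank_one_general (n k : ℕ) (hk1 : 1 ≤ k) (hkn : k ≤ n)
    (A : Matrix (Fin n) (Fin n) ℝ) (X : Fin n → ℝ) :
    sigmaMat (A - Matrix.vecMulVec X X) k =
      sigmaMat A k - X ⬝ᵥ (newtonT A (k - 1)).mulVec X := by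
  have hT := adjugateCharmatrixCoeff_eq_newtonT A (show k - 1 < n by omega)
  rw [show n - 1 - (k - 1) = n - k by omega] at hT
  have hsign : (-1 : ℝ) ^ k * (-1) ^ (k - 1) = -1 := by
    rw [← pow_add, show k + (k - 1) = 2 * (k - 1) + 1 by omega, pow_succ, pow_mul, neg_one_sq,
      one_pow, one_mul]
  rw [sigmaMat, sigmaMat, coeff_charpoly_sub_vecMulVec, hT, smul_mulVec, dotProduct_smul,
    smul_eq_mul]
  linear_combination (X ⬝ᵥ newtonT A (k - 1) *ᵥ X) * hsign

/-- `σ_k(A − X⊗X) = σ_k(A) − Xᵀ T_{k−1}(A) X`. -/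
theorem sigma_sub_rank_one (n k : ℕ) (hn : 1 ≤ n) (hk1 : 1 ≤ k) (hkn : k ≤ n)
    (A : Matrix (Fin n) (Fin n) ℝ) (hA : A.IsSymm) (X : Fin n → ℝ) :
    sigmaMat (A - Matrix.vecMulVec X X) k =
      sigmaMat A k - X ⬝ᵥ (newtonT A (k - 1)).mulVec X :=
  sigma_sub_rank_one_general n k hk1 hkn A X
end

section
/- Let n ≥ 1 and 0 ≤ k ≤ n. For every real symmetric n×n matrix A and every vector X ∈ ℝ^n, Xᵀ T_k(A − X⊗X) X = Xᵀ T_k(A) X, where X⊗X is the rank-one matrix with entries X_a X_b. -/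
open Matrix

open Polynomial Finset

/-!
The Newton transforms are the coefficients of the adjugate of `t • 1 - B`:
`adj (t • 1 - B) = ∑_{j<n} (-1)^j t^(n-1-j) T_j(B)`, where Cayley–Hamilton (`T_n(B) = 0`)
closes the telescoping sum. The matrix determinant lemma
`det (M + u vᵀ) = det M + vᵀ (adj M) u` applied to `M = t • 1 - B` then gives, coefficient by
coefficient, `σ_{k+1}(B + u vᵀ) = σ_{k+1}(B) + vᵀ T_k(B) u`. Feeding this into the recursion
`T_{k+1} = σ_{k+1} • 1 - B T_k` shows by induction that `T_k(B + u vᵀ) u = T_k(B) u` for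
`k ≤ n`; take `B = A - X Xᵀ` and `u = v = X`.
-/

namespace Matrix
variable {m : Type*} [Fintype m] [DecidableEq m]

theorem det_add_vecMulVec_of_isUnit {R : Type*} [CommRing R] {M : Matrix m m R}
    (hM : IsUnit M.det) (u v : m → R) :
    (M + vecMulVec u v).det = M.det + v ⬝ᵥ M.adjugate *ᵥ u := by
  rw [vecMulVec_eq Unit, det_add_replicateCol_mul_replicateRow hM, det_unique (1 + _),
    Matrix.mul_assoc, ← replicateCol_mulVec]
  simp [replicateRow_mul_replicateCol_apply, inv_def, mul_add, smul_mulVec, ← mul_assoc,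
    Ring.mul_inverse_cancel _ hM]

theorem det_add_vecMulVec {R : Type*} [CommRing R] [IsDomain R] {M : Matrix m m R}
    (hM : M.det ≠ 0) (u v : m → R) :
    (M + vecMulVec u v).det = M.det + v ⬝ᵥ M.adjugate *ᵥ u := by
  let φ := algebraMap R (FractionRing R)
  have hφ : Function.Injective φ := IsFractionRing.injective R (FractionRing R)
  have hφM : (φ.mapMatrix M).det ≠ 0 := by rwa [← RingHom.map_det, map_ne_zero_iff _ hφ]
  have hφuv : φ.mapMatrix (vecMulVec u v) = vecMulVec (φ ∘ u) (φ ∘ v) := by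
    ext i j; simp [vecMulVec_apply]
  apply hφ
  rw [RingHom.map_det, map_add, hφuv, det_add_vecMulVec_of_isUnit hφM.isUnit, map_add,
    RingHom.map_det, RingHom.map_dotProduct, ← RingHom.map_adjugate]
  congr 2
  ext i
  exact (RingHom.map_mulVec φ _ u i).symm

theorem adjugate_eq_of_mul_eq_det_smul {R : Type*} [CommRing R] [IsDomain R] {M N : Matrix m m R}
    (hM : M.det ≠ 0) (h : N * M = M.det • 1) : M.adjugate = N := by
  apply smul_right_injective _ hM
  calc M.det • M.adjugate = N * M * M.adjugate := by rw [h, smul_mul_assoc, Matrix.one_mul]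
    _ = M.det • N := by rw [Matrix.mul_assoc, mul_adjugate, mul_smul_comm, Matrix.mul_one]

end Matrix

section Newton

variable {n : ℕ} (B : Matrix (Fin n) (Fin n) ℝ)

theorem charpoly_coeff_dim_sub (k : ℕ) : B.charpoly.coeff (n - k) = (-1) ^ k * sigmaMat B k := by
  rw [sigmaMat, ← mul_assoc, ← pow_add, Even.neg_one_pow ⟨k, rfl⟩, one_mul]

theorem charpoly_coeff_dim : B.charpoly.coeff n = 1 := by
  simpa [charpoly_natDegree_eq_dim] using B.charpoly_monic.coeff_natDegree

theorem sigmaMat_zero : sigmaMat B 0 = 1 := by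
  simp [sigmaMat, charpoly_coeff_dim]

theorem newtonT_zero : newtonT B 0 = 1 := by
  simp [newtonT, sigmaMat_zero]

theorem newtonT_succ (k : ℕ) :
    newtonT B (k + 1) = sigmaMat B (k + 1) • 1 - B * newtonT B k := by
  rw [newtonT, sum_range_succ', newtonT, mul_sum, sub_eq_neg_add, ← sum_neg_distrib]
  simp only [Nat.succ_sub_succ, pow_zero, one_mul, Nat.sub_zero]
  congr 1
  refine sum_congr rfl fun j _ => ?_
  rw [mul_smul_comm, ← pow_succ', pow_succ, ← neg_smul]
  ring_nf

theorem commute_newtonT (k : ℕ) : Commute B (newtonT B k) :=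
  Commute.sum_right _ _ _ fun j _ => ((Commute.refl B).pow_right j).smul_right _

theorem newtonT_dim : newtonT B n = 0 := by
  have hdeg : B.charpoly.natDegree < n + 1 := by simp [charpoly_natDegree_eq_dim]
  have h : newtonT B n = (-1 : ℝ) ^ n • aeval B B.charpoly := by
    rw [aeval_eq_sum_range' hdeg, smul_sum, newtonT]
    refine sum_congr rfl fun j hj => ?_
    have hjn : j ≤ n := Nat.lt_succ_iff.mp (mem_range.mp hj)
    rw [sigmaMat, Nat.sub_sub_self hjn, smul_smul, ← mul_assoc, ← pow_add,
      Nat.add_sub_cancel' hjn]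
  rw [h, aeval_self_charpoly, smul_zero]

theorem charpoly_eq_X_pow_sub_sum : B.charpoly =
    X ^ n - ∑ j ∈ range n, C ((-1) ^ j * sigmaMat B (j + 1)) * X ^ (n - 1 - j) := by
  have hdeg : B.charpoly.natDegree = n := by simp [charpoly_natDegree_eq_dim]
  conv_lhs => rw [as_sum_range' B.charpoly (n + 1) (by omega), ← sum_range_reflect,
    sum_range_succ']
  simp only [Nat.add_sub_cancel, Nat.sub_zero, ← C_mul_X_pow_eq_monomial]
  rw [charpoly_coeff_dim, C_1, one_mul, sub_eq_neg_add, ← sum_neg_distrib]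
  congr 1
  refine sum_congr rfl fun j _ => ?_
  rw [(by omega : n - 1 - j = n - (j + 1)), charpoly_coeff_dim_sub, pow_succ]
  simp only [map_mul, map_pow, map_neg, C_1]
  ring

noncomputable def newtonAdj : Matrix (Fin n) (Fin n) ℝ[X] :=
  ∑ j ∈ range n, ((-1 : ℝ[X]) ^ j * X ^ (n - 1 - j)) • C.mapMatrix (newtonT B j)

theorem newtonAdj_mul_charmatrix : newtonAdj B * charmatrix B = B.charpoly • 1 := by
  set g : ℕ → Matrix (Fin n) (Fin n) ℝ[X] :=
    fun j => ((-1 : ℝ[X]) ^ j * X ^ (n - j)) • C.mapMatrix (newtonT B j) with hg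
  have hterm : ∀ j ∈ range n,
      ((-1 : ℝ[X]) ^ j * X ^ (n - 1 - j)) • C.mapMatrix (newtonT B j) * charmatrix B
        = g j - g (j + 1) - (C ((-1) ^ j * sigmaMat B (j + 1)) * X ^ (n - 1 - j)) • 1 := by
    intro j hj
    have hBT : B * newtonT B j = sigmaMat B (j + 1) • 1 - newtonT B (j + 1) := by
      rw [newtonT_succ, sub_sub_cancel]
    have hC : C.mapMatrix (sigmaMat B (j + 1) • (1 : Matrix (Fin n) (Fin n) ℝ)) =
        C (sigmaMat B (j + 1)) • 1 := by
      ext a b; by_cases hab : a = b <;> simp [one_apply, hab]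
    rw [charmatrix, scalar_apply, ← smul_one_eq_diagonal, mul_sub, smul_mul_assoc, mul_smul_comm,
      Matrix.mul_one, smul_mul_assoc, ← map_mul, ← (commute_newtonT B j).eq, hBT, map_sub, hC,
      hg]
    obtain ⟨r, rfl⟩ : ∃ r, n = j + 1 + r :=
      ⟨n - (j + 1), by have := mem_range.mp hj; omega⟩
    simp only [(by omega : j + 1 + r - 1 - j = r), (by omega : j + 1 + r - j = r + 1),
      Nat.add_sub_cancel_left, map_mul, map_pow, map_neg, C_1]
    module
  rw [newtonAdj, sum_mul, sum_congr rfl hterm, sum_sub_distrib, sum_range_sub', ← sum_smul,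
    charpoly_eq_X_pow_sub_sum, sub_smul]
  congr 1
  simp [hg, newtonT_zero, newtonT_dim]

theorem adjugate_charmatrix : (charmatrix B).adjugate = newtonAdj B :=
  adjugate_eq_of_mul_eq_det_smul B.charpoly_monic.ne_zero (newtonAdj_mul_charmatrix B)

theorem charmatrix_add_vecMulVec (u v : Fin n → ℝ) :
    charmatrix (B + vecMulVec u v) = charmatrix B + vecMulVec (-(C ∘ u)) (C ∘ v) := by
  ext a b
  simp [charmatrix_apply, vecMulVec_apply]
  ring

theorem charpoly_add_vecMulVec (u v : Fin n → ℝ) :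
    (B + vecMulVec u v).charpoly = B.charpoly - (C ∘ v) ⬝ᵥ newtonAdj B *ᵥ (C ∘ u) := by
  rw [charpoly, charmatrix_add_vecMulVec, det_add_vecMulVec B.charpoly_monic.ne_zero,
    adjugate_charmatrix, mulVec_neg, dotProduct_neg, ← sub_eq_add_neg, charpoly]

theorem coeff_dotProduct_newtonAdj_mulVec (u v : Fin n → ℝ) {k : ℕ} (hk : k < n) :
    ((C ∘ v) ⬝ᵥ newtonAdj B *ᵥ (C ∘ u)).coeff (n - (k + 1)) =
      (-1) ^ k * (v ⬝ᵥ newtonT B k *ᵥ u) := by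
  have hC : ∀ j,
      (C ∘ v) ⬝ᵥ C.mapMatrix (newtonT B j) *ᵥ (C ∘ u) =
        C (v ⬝ᵥ newtonT B j *ᵥ u) := by
    intro j
    rw [RingHom.map_dotProduct]
    congr 1
    funext i
    exact (RingHom.map_mulVec C _ u i).symm
  simp only [newtonAdj, sum_mulVec, dotProduct_sum, smul_mulVec, dotProduct_smul, hC, smul_eq_mul,
    finsetSum_coeff]
  have hterm : ∀ j,
      ((-1) ^ j * X ^ (n - 1 - j) * C (v ⬝ᵥ newtonT B j *ᵥ u)).coeff (n - (k + 1)) =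
        if n - (k + 1) = n - 1 - j then (-1) ^ j * (v ⬝ᵥ newtonT B j *ᵥ u) else 0 := by
    intro j
    rw [← coeff_C_mul_X_pow, map_mul, map_pow, map_neg, C_1]
    ring_nf
  simp only [hterm]
  rw [sum_eq_single_of_mem k (mem_range.mpr hk) fun j hj hjk => if_neg (by
    have := mem_range.mp hj; omega), if_pos (by omega)]

theorem sigmaMat_add_vecMulVec (u v : Fin n → ℝ) {k : ℕ} (hk : k < n) :
    sigmaMat (B + vecMulVec u v) (k + 1) = sigmaMat B (k + 1) + v ⬝ᵥ newtonT B k *ᵥ u := by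
  have h := congrArg (coeff · (n - (k + 1))) (charpoly_add_vecMulVec B u v)
  simp only [coeff_sub, charpoly_coeff_dim_sub, coeff_dotProduct_newtonAdj_mulVec B u v hk] at h
  have hsq : ((-1 : ℝ) ^ k) ^ 2 = 1 := by rw [← pow_mul, mul_comm, pow_mul, neg_one_sq, one_pow]
  linear_combination (-1) ^ (k + 1) * h -
    (sigmaMat (B + vecMulVec u v) (k + 1) - sigmaMat B (k + 1) - v ⬝ᵥ newtonT B k *ᵥ u) * hsq

theorem newtonT_add_vecMulVec_mulVec (u v : Fin n → ℝ) {k : ℕ} (hk : k ≤ n) :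
    newtonT (B + vecMulVec u v) k *ᵥ u = newtonT B k *ᵥ u := by
  induction k with
  | zero => rw [newtonT_zero, newtonT_zero]
  | succ k ih =>
    rw [newtonT_succ, newtonT_succ, sub_mulVec, sub_mulVec, ← mulVec_mulVec, ← mulVec_mulVec,
      ih (by omega), sigmaMat_add_vecMulVec B u v (by omega), add_mulVec, vecMulVec_mulVec]
    simp only [add_smul, add_mulVec, smul_mulVec, one_mulVec, op_smul_eq_smul]
    abel

end Newton

theorem newton_sub_rank_one_quadratic_general (n k : ℕ) (hkn : k ≤ n)
    (A : Matrix (Fin n) (Fin n) ℝ) (X : Fin n → ℝ) :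
    X ⬝ᵥ (newtonT (A - Matrix.vecMulVec X X) k).mulVec X =
      X ⬝ᵥ (newtonT A k).mulVec X := by
  rw [← newtonT_add_vecMulVec_mulVec (A - vecMulVec X X) X X hkn, sub_add_cancel]

/-- `Xᵀ T_k(A − X⊗X) X = Xᵀ T_k(A) X`. -/
theorem newton_sub_rank_one_quadratic (n k : ℕ) (hn : 1 ≤ n) (hkn : k ≤ n)
    (A : Matrix (Fin n) (Fin n) ℝ) (hA : A.IsSymm) (X : Fin n → ℝ) :
    X ⬝ᵥ (newtonT (A - Matrix.vecMulVec X X) k).mulVec X =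
      X ⬝ᵥ (newtonT A k).mulVec X :=
  newton_sub_rank_one_quadratic_general n k hkn A X
end
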